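/- arXiv:1808.07415 — 6 statements merged into one kernel-verified Lean document; each statement's English description precedes it below -/
import Mathlib

section
/- Let D ⊆ ℝ^l be an unbounded open convex set. Then exactly one of the following holds: (1) for every R > 0, the set D \ closedBall(0,R) has exactly one unbounded connected component; (2) there exists R₀ > 0 such that for every R ≥ R₀ the set D \ closedBall(0,R) has exactly two unbounded connected components. Moreover, alternative (2) holds if and only if there is a unit vector v ∈ ℝ^l with S_∞(D) = {v, −v}. -/
/-!
For `u ∈ S_∞(D)` the piece `{p ∈ D | R < ⟪p, u⟫}` of `D` beyond a half-space is convex, unbounded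
and misses `closedBall 0 R`, so it lies in one component of `D \ closedBall 0 R`. Every unbounded
component contains such a piece: its far points have normalisations accumulating at some
`u ∈ S_∞(D)` (a cluster direction of an open convex set is a recession direction), and the ray in
direction `u` from such a point stays outside the ball and enters the piece of `u`. The pieces of
`u` and `w` meet unless `w = -u` (go far along `u + w`), so there is a single unbounded component
unless `S_∞(D) = {v, -v}`. In that case `D ∩ v⊥` is bounded, as an unbounded part would produce a
direction at infinity orthogonal to `v`; so for large `R` the sign of `⟪·, v⟫` separates the pieces
of `v` and `-v`.
-/

open Set Metric Filter Topology RealInnerProductSpace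

/-- The set of directions at infinity of `D ⊆ ℝ^l`: unit vectors `v` such that some ray
`x + ℝ≥0 • v` starting in `D` stays in `D`. -/
def directionsAtInfinity (l : ℕ) (D : Set (EuclideanSpace ℝ (Fin l))) :
    Set (EuclideanSpace ℝ (Fin l)) :=
  {v | ‖v‖ = 1 ∧ ∃ x ∈ D, ∀ t : ℝ, 0 ≤ t → x + t • v ∈ D}

/-- The collection of unbounded connected components of a set `S ⊆ ℝ^l`. -/
def unboundedComponents (l : ℕ) (S : Set (EuclideanSpace ℝ (Fin l))) :
    Set (Set (EuclideanSpace ℝ (Fin l))) :=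
  {C | (∃ x ∈ S, C = connectedComponentIn S x) ∧ ¬ Bornology.IsBounded C}

section Recession

variable {E : Type*} [NormedAddCommGroup E] [NormedSpace ℝ E] {D : Set E}

theorem Convex.add_mem_closure_of_tendsto_smul {ι : Type*} {L : Filter ι} [L.NeBot]
    (hD : Convex ℝ D) {x u : E} (hx : x ∈ D) {c : ι → ℝ} {z : ι → E}
    (hz : ∀ᶠ i in L, z i ∈ D) (hc0 : ∀ᶠ i in L, 0 ≤ c i) (hc : Tendsto c L (𝓝 0))
    (hcz : Tendsto (fun i => c i • z i) L (𝓝 u)) : x + u ∈ closure D := by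
  have hmem : ∀ᶠ i in L, x + c i • (z i - x) ∈ D := by
    filter_upwards [hz, hc0, hc.eventually (ge_mem_nhds zero_lt_one)] with i hzi hci hci1
    convert hD hx hzi (sub_nonneg.2 hci1) hci (sub_add_cancel 1 (c i)) using 1
    module
  have hlim : Tendsto (fun i => x + c i • (z i - x)) L (𝓝 (x + u)) := by
    simpa [smul_sub] using tendsto_const_nhds.add (hcz.sub (hc.smul_const x))
  exact mem_closure_of_tendsto hlim hmem

theorem Convex.add_smul_mem_of_tendsto_smul {ι : Type*} {L : Filter ι} [L.NeBot]
    (hD : Convex ℝ D) (hDo : IsOpen D) {x u : E} (hx : x ∈ D) {c : ι → ℝ} {z : ι → E}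
    (hz : ∀ᶠ i in L, z i ∈ D) (hc0 : ∀ᶠ i in L, 0 ≤ c i) (hc : Tendsto c L (𝓝 0))
    (hcz : Tendsto (fun i => c i • z i) L (𝓝 u)) {t : ℝ} (ht : 0 ≤ t) : x + t • u ∈ D := by
  have hfar : x + (2 * t) • u ∈ closure D :=
    hD.add_mem_closure_of_tendsto_smul (c := fun i => 2 * t * c i) hx hz
      (hc0.mono fun i hi => by positivity) (by simpa using hc.const_mul (2 * t))
      (by simpa [mul_smul] using hcz.const_smul (2 * t))
  have hmid := hD.combo_interior_closure_mem_interior (hDo.interior_eq.symm ▸ hx) hfar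
    (a := 1 / 2) (b := 1 / 2) (by norm_num) (by norm_num) (by norm_num)
  rw [hDo.interior_eq] at hmid
  convert hmid using 1
  module

end Recession

section FarPart

variable {E : Type*} [NormedAddCommGroup E] [InnerProductSpace ℝ E] {D : Set E}

theorem norm_le_norm_add_smul_of_inner_nonneg {z u : E} (hzu : 0 ≤ ⟪z, u⟫) {t : ℝ} (ht : 0 ≤ t) :
    ‖z‖ ≤ ‖z + t • u‖ := by
  refine le_of_pow_le_pow_left₀ two_ne_zero (norm_nonneg _) ?_
  rw [norm_add_sq_real, real_inner_smul_right]
  nlinarith [sq_nonneg ‖t • u‖]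

theorem inner_add_self_left_pos {u w : E} (hu : ‖u‖ = 1) (hw : ‖w‖ = 1) (hne : w ≠ -u) :
    0 < ⟪u + w, u⟫ := by
  have hge : -(‖w‖ * ‖u‖) ≤ ⟪w, u⟫ := neg_le_of_abs_le (abs_real_inner_le_norm w u)
  have hne' : ⟪w, u⟫ ≠ -1 := fun h => hne ((inner_eq_neg_one_iff_of_norm_eq_one hw hu).1 h)
  rw [hw, hu, mul_one] at hge
  rw [inner_add_left, real_inner_self_eq_norm_sq, hu]
  linarith [lt_of_le_of_ne hge hne'.symm]

theorem eventually_lt_inner_add_smul (x : E) {m u : E} (h : 0 < ⟪m, u⟫) (R : ℝ) :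
    ∀ᶠ t : ℝ in atTop, R < ⟪x + t • m, u⟫ := by
  simp only [inner_add_left, real_inner_smul_left]
  have hlin : Tendsto (fun t : ℝ => t * ⟪m, u⟫) atTop atTop := tendsto_id.atTop_mul_const h
  exact (tendsto_atTop_add_const_left _ _ hlin).eventually_gt_atTop R

def farPart (D : Set E) (u : E) (R : ℝ) : Set E := {p ∈ D | R < ⟪p, u⟫}

theorem farPart_subset_diff_closedBall {u : E} (hu : ‖u‖ = 1) (R : ℝ) :
    farPart D u R ⊆ D \ closedBall 0 R := by
  rintro p ⟨hpD, hpR⟩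
  refine ⟨hpD, fun hp => ?_⟩
  have := real_inner_le_norm p u
  rw [hu, mul_one] at this
  linarith [mem_closedBall_zero_iff.1 hp]

theorem Convex.farPart (hD : Convex ℝ D) (u : E) (R : ℝ) : Convex ℝ (farPart D u R) :=
  hD.inter (convex_halfSpace_gt (f := fun p => ⟪p, u⟫)
    ⟨fun x y => inner_add_left x y u, fun c x => real_inner_smul_left x u c⟩ R)

theorem farPart_subset_connectedComponentIn (hD : Convex ℝ D) {u p : E} (hu : ‖u‖ = 1)
    {R : ℝ} (hp : p ∈ farPart D u R) :
    farPart D u R ⊆ connectedComponentIn (D \ closedBall 0 R) p :=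
  (hD.farPart u R).isPreconnected.subset_connectedComponentIn hp
    (farPart_subset_diff_closedBall hu R)

theorem connectedComponentIn_eq_of_mem_farPart (hD : Convex ℝ D) {u p q : E} (hu : ‖u‖ = 1)
    {R : ℝ} (hp : p ∈ farPart D u R) (hq : q ∈ farPart D u R) :
    connectedComponentIn (D \ closedBall 0 R) p = connectedComponentIn (D \ closedBall 0 R) q :=
  connectedComponentIn_eq (farPart_subset_connectedComponentIn hD hu hp hq)

end FarPart

theorem connectedComponentIn_ne_of_pos_of_neg {X : Type*} [TopologicalSpace X] {S : Set X}
    {f : X → ℝ} (hf : Continuous f) (hS : ∀ y ∈ S, f y ≠ 0) {p q : X} (hp : p ∈ S) (hq : q ∈ S)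
    (hfp : 0 < f p) (hfq : f q < 0) : connectedComponentIn S p ≠ connectedComponentIn S q := by
  intro h
  obtain ⟨y, hy, hy0⟩ := isPreconnected_connectedComponentIn.intermediate_value
    (h ▸ mem_connectedComponentIn hq) (mem_connectedComponentIn hp) hf.continuousOn
    ⟨hfq.le, hfp.le⟩
  exact hS y (connectedComponentIn_subset _ _ hy) hy0

section Directions

variable {l : ℕ} {D : Set (EuclideanSpace ℝ (Fin l))}

theorem add_smul_mem_of_mem_directionsAtInfinity (hDo : IsOpen D) (hD : Convex ℝ D)
    {u x : EuclideanSpace ℝ (Fin l)} (hu : u ∈ directionsAtInfinity l D) (hx : x ∈ D) {t : ℝ}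
    (ht : 0 ≤ t) : x + t • u ∈ D := by
  obtain ⟨-, x₁, -, hray⟩ := hu
  refine hD.add_smul_mem_of_tendsto_smul hDo (L := atTop) (c := fun s : ℝ => s⁻¹)
    (z := fun s => x₁ + s • u) hx ?_ ?_ tendsto_inv_atTop_zero ?_ ht
  · filter_upwards [eventually_ge_atTop 0] with s hs using hray s hs
  · filter_upwards [eventually_ge_atTop 0] with s hs using inv_nonneg.2 hs
  · have hlim : Tendsto (fun s : ℝ => s⁻¹ • x₁ + u) atTop (𝓝 u) := by
      simpa using ((tendsto_inv_atTop_zero (𝕜 := ℝ)).smul_const x₁).add_const u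
    refine hlim.congr' ?_
    filter_upwards [eventually_gt_atTop 0] with s hs
    rw [smul_add, smul_smul, inv_mul_cancel₀ hs.ne', one_smul]

theorem exists_mem_directionsAtInfinity_mem_closure (hDo : IsOpen D) (hD : Convex ℝ D)
    {A : Set (EuclideanSpace ℝ (Fin l))} (hAD : A ⊆ D) (hA : ¬ Bornology.IsBounded A) :
    ∃ u ∈ directionsAtInfinity l D, u ∈ closure ((fun z => ‖z‖⁻¹ • z) '' A) := by
  obtain ⟨z, hzA, hz⟩ : ∃ z : ℕ → EuclideanSpace ℝ (Fin l), (∀ n, z n ∈ A) ∧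
      ∀ n : ℕ, (n : ℝ) < ‖z n‖ := by
    simp only [isBounded_iff_forall_norm_le, not_exists, not_forall, not_le] at hA
    choose z hzA hz using fun n : ℕ => hA n
    exact ⟨z, hzA, hz⟩
  have hz0 : ∀ n, z n ≠ 0 := fun n h => by
    simpa [h] using (Nat.cast_nonneg n).trans_lt (hz n)
  have hnorm : Tendsto (fun n => ‖z n‖) atTop atTop :=
    tendsto_atTop_mono (fun n => (hz n).le) tendsto_natCast_atTop_atTop
  obtain ⟨u, hu, φ, hφ, hlim⟩ := (isCompact_sphere (0 : EuclideanSpace ℝ (Fin l)) 1).tendsto_subseq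
    (x := fun n => ‖z n‖⁻¹ • z n) (fun n => by simpa using norm_smul_inv_norm (𝕜 := ℝ) (hz0 n))
  refine ⟨u, ⟨by simpa using hu, z 0, hAD (hzA 0), fun t ht => ?_⟩,
    mem_closure_of_tendsto hlim (Eventually.of_forall fun n => mem_image_of_mem _ (hzA (φ n)))⟩
  exact hD.add_smul_mem_of_tendsto_smul hDo (hAD (hzA 0))
    (Eventually.of_forall fun n => hAD (hzA (φ n))) (Eventually.of_forall fun n => inv_nonneg.2 (norm_nonneg _))
    (hnorm.comp hφ.tendsto_atTop).inv_tendsto_atTop hlim ht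

theorem farPart_nonempty {u : EuclideanSpace ℝ (Fin l)} (hu : u ∈ directionsAtInfinity l D)
    (R : ℝ) : (farPart D u R).Nonempty := by
  obtain ⟨hu1, x, -, hray⟩ := hu
  have huu : 0 < ⟪u, u⟫ := by simp [hu1]
  obtain ⟨t, htR, ht0⟩ :=
    ((eventually_lt_inner_add_smul x huu R).and (eventually_ge_atTop 0)).exists
  exact ⟨x + t • u, hray t ht0, htR⟩

theorem not_isBounded_farPart {u : EuclideanSpace ℝ (Fin l)} (hu : u ∈ directionsAtInfinity l D)
    (R : ℝ) : ¬ Bornology.IsBounded (farPart D u R) := by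
  intro hb
  obtain ⟨M, hM⟩ := isBounded_iff_forall_norm_le.1 hb
  obtain ⟨p, hpD, hpM⟩ := farPart_nonempty hu (max R M)
  have hpu := real_inner_le_norm p u
  rw [hu.1, mul_one] at hpu
  linarith [hM p ⟨hpD, (le_max_left R M).trans_lt hpM⟩, le_max_right R M]

theorem farPart_inter_farPart_nonempty (hDo : IsOpen D) (hD : Convex ℝ D)
    {u w : EuclideanSpace ℝ (Fin l)} (hu : u ∈ directionsAtInfinity l D)
    (hw : w ∈ directionsAtInfinity l D) (hne : w ≠ -u) (R : ℝ) :
    (farPart D u R ∩ farPart D w R).Nonempty := by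
  obtain ⟨hu1, x, -, hray⟩ := hu
  have hmem : ∀ t : ℝ, 0 ≤ t → x + t • (u + w) ∈ D := fun t ht => by
    rw [smul_add, ← add_assoc]
    exact add_smul_mem_of_mem_directionsAtInfinity hDo hD hw (hray t ht) ht
  have hwu : 0 < ⟪u + w, w⟫ := by
    rw [add_comm]
    exact inner_add_self_left_pos hw.1 hu1 fun h => hne (by rw [h, neg_neg])
  obtain ⟨t, ⟨htu, htw⟩, ht0⟩ :=
    (((eventually_lt_inner_add_smul x (inner_add_self_left_pos hu1 hw.1 hne) R).and
      (eventually_lt_inner_add_smul x hwu R)).and (eventually_ge_atTop 0)).exists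
  exact ⟨x + t • (u + w), ⟨hmem t ht0, htu⟩, hmem t ht0, htw⟩

theorem connectedComponentIn_eq_of_ne_neg (hDo : IsOpen D) (hD : Convex ℝ D)
    {u w p q : EuclideanSpace ℝ (Fin l)} (hu : u ∈ directionsAtInfinity l D)
    (hw : w ∈ directionsAtInfinity l D) (hne : w ≠ -u) {R : ℝ} (hp : p ∈ farPart D u R)
    (hq : q ∈ farPart D w R) :
    connectedComponentIn (D \ closedBall 0 R) p = connectedComponentIn (D \ closedBall 0 R) q := by
  obtain ⟨y, hyu, hyw⟩ := farPart_inter_farPart_nonempty hDo hD hu hw hne R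
  rw [connectedComponentIn_eq_of_mem_farPart hD hu.1 hp hyu,
    connectedComponentIn_eq_of_mem_farPart hD hw.1 hyw hq]

theorem exists_mem_farPart_connectedComponentIn_eq (hDo : IsOpen D) (hD : Convex ℝ D)
    {u z : EuclideanSpace ℝ (Fin l)} (hu : u ∈ directionsAtInfinity l D) {R : ℝ}
    (hz : z ∈ D \ closedBall 0 R) (hzu : 0 ≤ ⟪z, u⟫) :
    ∃ p ∈ farPart D u R,
      connectedComponentIn (D \ closedBall 0 R) z = connectedComponentIn (D \ closedBall 0 R) p := by
  have huu : 0 < ⟪u, u⟫ := by simp [hu.1]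
  obtain ⟨T, hTR, hT0⟩ :=
    ((eventually_lt_inner_add_smul z huu R).and (eventually_ge_atTop 0)).exists
  have hray : (fun t : ℝ => z + t • u) '' Icc 0 T ⊆ D \ closedBall 0 R := by
    rintro _ ⟨t, ht, rfl⟩
    refine ⟨add_smul_mem_of_mem_directionsAtInfinity hDo hD hu hz.1 ht.1, fun hzt => hz.2 ?_⟩
    rw [mem_closedBall_zero_iff] at hzt ⊢
    exact (norm_le_norm_add_smul_of_inner_nonneg hzu ht.1).trans hzt
  refine ⟨z + T • u, ⟨add_smul_mem_of_mem_directionsAtInfinity hDo hD hu hz.1 hT0, hTR⟩,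
    connectedComponentIn_eq ?_⟩
  exact (isPreconnected_Icc.image _ (by fun_prop)).subset_connectedComponentIn
    ⟨0, left_mem_Icc.2 hT0, by simp⟩ hray ⟨T, right_mem_Icc.2 hT0, rfl⟩

theorem unboundedComponents_eq (hDo : IsOpen D) (hD : Convex ℝ D) (R : ℝ) :
    unboundedComponents l (D \ closedBall 0 R) =
      {C | ∃ u ∈ directionsAtInfinity l D, ∃ p ∈ farPart D u R,
        C = connectedComponentIn (D \ closedBall 0 R) p} := by
  ext C
  constructor
  · rintro ⟨⟨x, -, rfl⟩, hC⟩
    obtain ⟨u, hu, hu_cl⟩ := exists_mem_directionsAtInfinity_mem_closure hDo hD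
      ((connectedComponentIn_subset _ _).trans sdiff_subset) hC
    obtain ⟨_, hzu, z, hz, rfl⟩ := mem_closure_iff.1 hu_cl {w | 0 < ⟪w, u⟫}
      (isOpen_lt continuous_const (by fun_prop)) (by simp [hu.1])
    rw [mem_ofPred_eq, real_inner_smul_left] at hzu
    obtain ⟨p, hp, hzp⟩ := exists_mem_farPart_connectedComponentIn_eq hDo hD hu
      (connectedComponentIn_subset _ _ hz) (pos_of_mul_pos_right hzu (by positivity)).le
    exact ⟨u, hu, p, hp, (connectedComponentIn_eq hz).trans hzp⟩
  · rintro ⟨u, hu, p, hp, rfl⟩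
    exact ⟨⟨p, farPart_subset_diff_closedBall hu.1 R hp, rfl⟩, fun hb =>
      not_isBounded_farPart hu R (hb.subset (farPart_subset_connectedComponentIn hD hu.1 hp))⟩

theorem ncard_unboundedComponents_eq_one (hDo : IsOpen D) (hD : Convex ℝ D)
    (hDu : ¬ Bornology.IsBounded D)
    (hS : ¬ ∃ v : EuclideanSpace ℝ (Fin l), ‖v‖ = 1 ∧ directionsAtInfinity l D = {v, -v})
    (R : ℝ) : (unboundedComponents l (D \ closedBall 0 R)).ncard = 1 := by
  obtain ⟨u₀, hu₀, -⟩ := exists_mem_directionsAtInfinity_mem_closure hDo hD subset_rfl hDu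
  obtain ⟨p₀, hp₀⟩ := farPart_nonempty hu₀ R
  have hlink : ∀ u ∈ directionsAtInfinity l D, ∀ p ∈ farPart D u R,
      connectedComponentIn (D \ closedBall 0 R) p = connectedComponentIn (D \ closedBall 0 R) p₀ := by
    intro u hu p hp
    by_cases hne : u₀ ≠ -u
    · exact connectedComponentIn_eq_of_ne_neg hDo hD hu hu₀ hne hp hp₀
    rw [not_not] at hne
    obtain ⟨c, hc, hcu₀⟩ : ∃ c ∈ directionsAtInfinity l D, c ∉ ({u₀, -u₀} : Set _) := by
      by_contra! h
      refine hS ⟨u₀, hu₀.1, Subset.antisymm h (insert_subset hu₀ (singleton_subset_iff.2 ?_))⟩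
      rwa [hne, neg_neg]
    simp only [mem_insert_iff, mem_singleton_iff, not_or] at hcu₀
    obtain ⟨q, hq⟩ := farPart_nonempty hc R
    rw [connectedComponentIn_eq_of_ne_neg hDo hD hu hc (by rw [← hne]; exact hcu₀.1) hp hq]
    exact connectedComponentIn_eq_of_ne_neg hDo hD hc hu₀
      (fun h => hcu₀.2 (by rw [h, neg_neg])) hq hp₀
  rw [ncard_eq_one, unboundedComponents_eq hDo hD]
  refine ⟨connectedComponentIn (D \ closedBall 0 R) p₀, Subset.antisymm ?_ ?_⟩
  · rintro _ ⟨u, hu, p, hp, rfl⟩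
    exact hlink u hu p hp
  · rintro _ rfl
    exact ⟨u₀, hu₀, p₀, hp₀, rfl⟩

theorem isBounded_setOf_inner_eq_zero (hDo : IsOpen D) (hD : Convex ℝ D)
    {v : EuclideanSpace ℝ (Fin l)} (hS : directionsAtInfinity l D = {v, -v}) :
    Bornology.IsBounded {y ∈ D | ⟪y, v⟫ = 0} := by
  by_contra hA
  obtain ⟨u, hu, hcl⟩ := exists_mem_directionsAtInfinity_mem_closure hDo hD (sep_subset _ _) hA
  have huv : ⟪u, v⟫ = 0 := by
    refine (isClosed_eq (f := fun w => ⟪w, v⟫) (by fun_prop) continuous_const).closure_subset_iff.2 ?_ hcl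
    rintro _ ⟨y, hy, rfl⟩
    simp [real_inner_smul_left, hy.2]
  have hv : ‖v‖ = 1 := (hS ▸ mem_insert v _ : v ∈ directionsAtInfinity l D).1
  rw [hS] at hu
  rcases hu with h | h <;> simp_all

theorem ncard_unboundedComponents_eq_two (hDo : IsOpen D) (hD : Convex ℝ D)
    {v : EuclideanSpace ℝ (Fin l)} (hv : ‖v‖ = 1) (hS : directionsAtInfinity l D = {v, -v}) :
    ∃ R₀ : ℝ, 0 < R₀ ∧ ∀ R : ℝ, R₀ ≤ R →
      (unboundedComponents l (D \ closedBall 0 R)).ncard = 2 := by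
  obtain ⟨M, hM⟩ := isBounded_iff_forall_norm_le.1 (isBounded_setOf_inner_eq_zero hDo hD hS)
  refine ⟨max M 0 + 1, by positivity, fun R hR => ?_⟩
  have hv_mem : v ∈ directionsAtInfinity l D := hS ▸ mem_insert _ _
  have hnv_mem : -v ∈ directionsAtInfinity l D := hS ▸ mem_insert_of_mem _ rfl
  obtain ⟨p, hp⟩ := farPart_nonempty hv_mem R
  obtain ⟨q, hq⟩ := farPart_nonempty hnv_mem R
  have hR0 : 0 < R := by linarith [le_max_right M 0]
  have hne : connectedComponentIn (D \ closedBall 0 R) p ≠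
      connectedComponentIn (D \ closedBall 0 R) q := by
    refine connectedComponentIn_ne_of_pos_of_neg (f := fun y => ⟪y, v⟫) (by fun_prop) ?_
      (farPart_subset_diff_closedBall hv R hp) (farPart_subset_diff_closedBall hnv_mem.1 R hq)
      (hR0.trans hp.2) ?_
    · rintro y ⟨hyD, hyR⟩ hy0
      exact hyR (mem_closedBall_zero_iff.2 ((hM y ⟨hyD, hy0⟩).trans (by linarith [le_max_left M 0])))
    · have := hq.2
      rw [inner_neg_right] at this
      linarith
  rw [unboundedComponents_eq hDo hD, ← ncard_pair hne]
  congr 1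
  refine Subset.antisymm ?_ ?_
  · rintro _ ⟨u, hu, r, hr, rfl⟩
    rw [hS] at hu
    rcases hu with h | h
    · exact Or.inl (connectedComponentIn_eq_of_mem_farPart hD hv (h ▸ hr) hp)
    · exact Or.inr (connectedComponentIn_eq_of_mem_farPart hD hnv_mem.1 ((mem_singleton_iff.1 h) ▸ hr) hq)
  · rintro _ (rfl | rfl)
    exacts [⟨v, hv_mem, p, hp, rfl⟩, ⟨-v, hnv_mem, q, hq, rfl⟩]

end Directions

theorem one_or_two_unbounded_components_general (l : ℕ)
    (D : Set (EuclideanSpace ℝ (Fin l))) (hD_open : IsOpen D) (hD_conv : Convex ℝ D)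
    (hD_unb : ¬ Bornology.IsBounded D) :
    Xor'
      (∀ R : ℝ, 0 < R →
        (unboundedComponents l (D \ closedBall 0 R)).ncard = 1)
      (∃ R₀ : ℝ, 0 < R₀ ∧ ∀ R : ℝ, R₀ ≤ R →
        (unboundedComponents l (D \ closedBall 0 R)).ncard = 2)
    ∧
    ((∃ R₀ : ℝ, 0 < R₀ ∧ ∀ R : ℝ, R₀ ≤ R →
        (unboundedComponents l (D \ closedBall 0 R)).ncard = 2)
      ↔ ∃ v : EuclideanSpace ℝ (Fin l), ‖v‖ = 1 ∧
          directionsAtInfinity l D = {v, -v}) := by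
  have not_both : (∀ R : ℝ, 0 < R → (unboundedComponents l (D \ closedBall 0 R)).ncard = 1) →
      ¬ ∃ R₀ : ℝ, 0 < R₀ ∧ ∀ R : ℝ, R₀ ≤ R →
        (unboundedComponents l (D \ closedBall 0 R)).ncard = 2 := by
    rintro h1 ⟨R₀, hR₀, h2⟩
    simpa [h1 R₀ hR₀] using h2 R₀ le_rfl
  by_cases hS : ∃ v : EuclideanSpace ℝ (Fin l), ‖v‖ = 1 ∧ directionsAtInfinity l D = {v, -v}
  · obtain ⟨v, hv, hSv⟩ := hS
    have h2 := ncard_unboundedComponents_eq_two hD_open hD_conv hv hSv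
    exact ⟨Or.inr ⟨h2, fun h1 => not_both h1 h2⟩, iff_of_true h2 ⟨v, hv, hSv⟩⟩
  · have h1 := fun R (_ : 0 < R) => ncard_unboundedComponents_eq_one hD_open hD_conv hD_unb hS R
    exact ⟨Or.inl ⟨h1, not_both h1⟩, iff_of_false (not_both h1) hS⟩

/-- For an unbounded open convex set `D ⊆ ℝ^l`, exactly one of the following
holds: (1) for every `R > 0` the set `D \ closedBall 0 R` has exactly one unbounded connected
component; (2) there is `R₀ > 0` such that for every `R ≥ R₀` the set `D \ closedBall 0 R` has
exactly two unbounded connected components.  Moreover (2) holds iff `S_∞(D) = {v, -v}` for some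
unit vector `v`. -/
theorem one_or_two_unbounded_components (l : ℕ) (hl : 1 ≤ l)
    (D : Set (EuclideanSpace ℝ (Fin l))) (hD_open : IsOpen D) (hD_conv : Convex ℝ D)
    (hD_unb : ¬ Bornology.IsBounded D) :
    Xor'
      (∀ R : ℝ, 0 < R →
        (unboundedComponents l (D \ closedBall 0 R)).ncard = 1)
      (∃ R₀ : ℝ, 0 < R₀ ∧ ∀ R : ℝ, R₀ ≤ R →
        (unboundedComponents l (D \ closedBall 0 R)).ncard = 2)
    ∧
    ((∃ R₀ : ℝ, 0 < R₀ ∧ ∀ R : ℝ, R₀ ≤ R →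
        (unboundedComponents l (D \ closedBall 0 R)).ncard = 2)
      ↔ ∃ v : EuclideanSpace ℝ (Fin l), ‖v‖ = 1 ∧
          directionsAtInfinity l D = {v, -v}) :=
  one_or_two_unbounded_components_general l D hD_open hD_conv hD_unb
end

section
/- Let D ⊆ ℝ^l be an unbounded open convex set and let v ∈ ℝ^l be a unit vector with S_∞(D) = {v, −v}. Let H be the orthogonal complement of the line ℝ·v in ℝ^l. Then Ω := D ∩ H is a bounded convex set and D = {ω + t•v : ω ∈ Ω, t ∈ ℝ}. -/
open Set Metric

/-!
Since `D` is open and convex, a ray contained in `D` may be translated to start at any point of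
`D`; as both `v` and `-v` are directions at infinity, `D` is invariant under translation along
`ℝ ∙ v`, which gives the decomposition. If `D ∩ (ℝ ∙ v)ᗮ` were unbounded, the normalised
displacements of its far points would accumulate, by compactness of the unit sphere, at a unit
vector `u ⊥ v` whose ray lies in the closure of `D`, hence in `D`: a direction at infinity other
than `±v`.
-/

open Filter Topology

section TopologicalVectorSpace

variable {E : Type*} [AddCommGroup E] [Module ℝ E] [TopologicalSpace E]
  [IsTopologicalAddGroup E] [ContinuousSMul ℝ E] {D : Set E}

/- Moving `y` slightly away from `x` stays inside `D`, and `y + t • w` is a convex combination of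
that point and a far point of the ray from `x`. -/
theorem Convex.add_smul_mem_of_ray_subset (hD_conv : Convex ℝ D) (hD_open : IsOpen D) {x w : E}
    (hray : ∀ t : ℝ, 0 ≤ t → x + t • w ∈ D) {y : E} (hy : y ∈ D) {t : ℝ} (ht : 0 ≤ t) :
    y + t • w ∈ D := by
  have hnear : ∀ᶠ s in 𝓝[>] (0 : ℝ), y + s • (y - x) ∈ D := by
    have hcont : Continuous fun s : ℝ => y + s • (y - x) := by fun_prop
    exact nhdsWithin_le_nhds (hcont.tendsto' 0 y (by simp) |>.eventually (hD_open.mem_nhds hy))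
  obtain ⟨s, hsD, hs : 0 < s⟩ := (hnear.and self_mem_nhdsWithin).exists
  have hcomb := hD_conv hsD (hray ((1 + s) / s * t) (by positivity))
    (a := (1 + s)⁻¹) (b := s / (1 + s)) (by positivity) (by positivity) (by field_simp)
  convert hcomb using 1
  match_scalars <;> field_simp
  ring

theorem Convex.add_smul_mem_of_rays (hD_conv : Convex ℝ D) (hD_open : IsOpen D) {x x' v : E}
    (hpos : ∀ t : ℝ, 0 ≤ t → x + t • v ∈ D) (hneg : ∀ t : ℝ, 0 ≤ t → x' + t • -v ∈ D)
    {y : E} (hy : y ∈ D) (t : ℝ) : y + t • v ∈ D := by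
  rcases le_total 0 t with ht | ht
  · exact hD_conv.add_smul_mem_of_ray_subset hD_open hpos hy ht
  · simpa using hD_conv.add_smul_mem_of_ray_subset hD_open hneg hy (neg_nonneg.mpr ht)

theorem Convex.add_smul_mem_interior_of_ray_subset_closure (hD : Convex ℝ D) {x u : E}
    (hx : x ∈ interior D) (hray : ∀ t : ℝ, 0 ≤ t → x + t • u ∈ closure D) {t : ℝ}
    (ht : 0 ≤ t) : x + t • u ∈ interior D := by
  have hmid := hD.combo_interior_closure_mem_interior hx (hray (2 * t) (by positivity))
    (a := 1 / 2) (b := 1 / 2) (by norm_num) (by norm_num) (by norm_num)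
  convert hmid using 1
  module

end TopologicalVectorSpace

theorem Convex.exists_ray_subset_closure_of_not_isBounded {E : Type*} [NormedAddCommGroup E]
    [NormedSpace ℝ E] [ProperSpace E] {C : Set E} (hC : Convex ℝ C)
    (hunb : ¬ Bornology.IsBounded C) {x : E} (hx : x ∈ C) :
    ∃ u : E, ‖u‖ = 1 ∧ ∀ t : ℝ, 0 ≤ t → x + t • u ∈ closure C := by
  have hfar : ∀ n : ℕ, ∃ ω ∈ C, (n : ℝ) < ‖ω - x‖ := by
    intro n
    by_contra! h
    exact hunb ((isBounded_closedBall (x := x) (r := n)).subset fun ω hω => by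
      simpa [dist_eq_norm] using h ω hω)
  choose ω hωC hωfar using hfar
  have hdist_pos n : 0 < ‖ω n - x‖ := (Nat.cast_nonneg n).trans_lt (hωfar n)
  set u : ℕ → E := fun n => ‖ω n - x‖⁻¹ • (ω n - x)
  have hu n : u n ∈ sphere (0 : E) 1 := by simp [u, norm_smul, (hdist_pos n).ne']
  obtain ⟨u₀, hu₀, φ, hφ, hlim⟩ := (isCompact_sphere (0 : E) 1).tendsto_subseq hu
  refine ⟨u₀, by simpa using hu₀, fun t ht => ?_⟩
  refine mem_closure_of_tendsto (tendsto_const_nhds.add (hlim.const_smul t)) ?_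
  filter_upwards [(tendsto_natCast_atTop_atTop.comp hφ.tendsto_atTop).eventually_gt_atTop t]
    with k hk
  have hseg : x + t • u (φ k) = x + (t / ‖ω (φ k) - x‖) • (ω (φ k) - x) := by
    simp [u, smul_smul, div_eq_mul_inv]
  rw [Function.comp_apply, hseg]
  exact hC.add_smul_sub_mem hx (hωC _)
    ⟨by positivity, div_le_one_of_le₀ (hk.le.trans (hωfar _).le) (norm_nonneg _)⟩

theorem eq_setOf_add_smul_of_forall_add_smul_mem {E : Type*} [NormedAddCommGroup E]
    [InnerProductSpace ℝ E] {D : Set E} {v : E} (hline : ∀ y ∈ D, ∀ t : ℝ, y + t • v ∈ D) :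
    D = {z | ∃ ω ∈ D ∩ ((ℝ ∙ v)ᗮ : Submodule ℝ E), ∃ t : ℝ, z = ω + t • v} := by
  ext z
  constructor
  · intro hz
    obtain ⟨p, hp, ω, hω, rfl⟩ := (ℝ ∙ v).exists_add_mem_mem_orthogonal z
    obtain ⟨t, rfl⟩ := Submodule.mem_span_singleton.mp hp
    refine ⟨ω, ⟨?_, hω⟩, t, add_comm _ _⟩
    simpa using hline _ hz (-t)
  · rintro ⟨ω, ⟨hω, -⟩, t, rfl⟩
    exact hline ω hω t

theorem exists_mem_directionsAtInfinity_mem_of_not_isBounded_inter {l : ℕ}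
    {D : Set (EuclideanSpace ℝ (Fin l))} (hD_open : IsOpen D) (hD_conv : Convex ℝ D)
    {K : Submodule ℝ (EuclideanSpace ℝ (Fin l))} (hunb : ¬ Bornology.IsBounded (D ∩ K)) :
    ∃ u ∈ directionsAtInfinity l D, u ∈ K := by
  obtain ⟨x, hxD, hxK⟩ : (D ∩ K).Nonempty :=
    nonempty_iff_ne_empty.mpr fun h => hunb (h ▸ Bornology.isBounded_empty)
  obtain ⟨u, hu, hray⟩ :=
    (hD_conv.inter K.convex).exists_ray_subset_closure_of_not_isBounded hunb ⟨hxD, hxK⟩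
  refine ⟨u, ⟨hu, x, hxD, fun t ht => ?_⟩, ?_⟩
  · rw [← hD_open.interior_eq] at hxD ⊢
    exact hD_conv.add_smul_mem_interior_of_ray_subset_closure hxD
      (fun t ht => closure_mono inter_subset_left (hray t ht)) ht
  · have hxu : x + (1 : ℝ) • u ∈ K :=
      closure_minimal inter_subset_right K.closed_of_finiteDimensional (hray 1 zero_le_one)
    simpa using K.sub_mem hxu hxK

theorem decomposition_two_ends_general (l : ℕ)
    (D : Set (EuclideanSpace ℝ (Fin l))) (hD_open : IsOpen D) (hD_conv : Convex ℝ D)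
    (v : EuclideanSpace ℝ (Fin l))
    (hdir : directionsAtInfinity l D = {v, -v}) :
    Bornology.IsBounded (D ∩ ((ℝ ∙ v)ᗮ : Submodule ℝ (EuclideanSpace ℝ (Fin l))))
    ∧ Convex ℝ (D ∩ ((ℝ ∙ v)ᗮ : Submodule ℝ (EuclideanSpace ℝ (Fin l))))
    ∧ D = {z | ∃ ω ∈ D ∩ ((ℝ ∙ v)ᗮ : Submodule ℝ (EuclideanSpace ℝ (Fin l))),
              ∃ t : ℝ, z = ω + t • v} := by
  obtain ⟨-, x, -, hpos⟩ : v ∈ directionsAtInfinity l D := hdir ▸ mem_insert v _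
  obtain ⟨-, x', -, hneg⟩ : -v ∈ directionsAtInfinity l D := hdir ▸ mem_insert_of_mem v rfl
  have hline (y) (hy : y ∈ D) (t : ℝ) : y + t • v ∈ D :=
    hD_conv.add_smul_mem_of_rays hD_open hpos hneg hy t
  refine ⟨?_, hD_conv.inter (Submodule.convex _), eq_setOf_add_smul_of_forall_add_smul_mem hline⟩
  by_contra hunb
  obtain ⟨u, hu, hu_orth⟩ :=
    exists_mem_directionsAtInfinity_mem_of_not_isBounded_inter hD_open hD_conv hunb
  have hu_line : u ∈ ℝ ∙ v := by
    rcases (hdir ▸ hu : u ∈ ({v, -v} : Set _)) with rfl | rfl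
    · exact Submodule.mem_span_singleton_self u
    · exact neg_mem (Submodule.mem_span_singleton_self v)
  have hu_zero : u = 0 := Submodule.disjoint_def.mp (ℝ ∙ v).orthogonal_disjoint u hu_line hu_orth
  simpa [hu_zero] using hu.1

/-- If `D ⊆ ℝ^l` is an unbounded open convex set whose only directions at
infinity are `v` and `-v`, and `H = (ℝ·v)ᗮ`, then `Ω = D ∩ H` is a bounded convex set and
`D = {ω + t • v : ω ∈ Ω, t ∈ ℝ}`. -/
theorem decomposition_two_ends (l : ℕ) (hl : 1 ≤ l)
    (D : Set (EuclideanSpace ℝ (Fin l))) (hD_open : IsOpen D) (hD_conv : Convex ℝ D)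
    (hD_unb : ¬ Bornology.IsBounded D)
    (v : EuclideanSpace ℝ (Fin l)) (hv : ‖v‖ = 1)
    (hdir : directionsAtInfinity l D = {v, -v}) :
    Bornology.IsBounded (D ∩ ((ℝ ∙ v)ᗮ : Submodule ℝ (EuclideanSpace ℝ (Fin l))))
    ∧ Convex ℝ (D ∩ ((ℝ ∙ v)ᗮ : Submodule ℝ (EuclideanSpace ℝ (Fin l))))
    ∧ D = {z | ∃ ω ∈ D ∩ ((ℝ ∙ v)ᗮ : Submodule ℝ (EuclideanSpace ℝ (Fin l))),
              ∃ t : ℝ, z = ω + t • v} :=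
  decomposition_two_ends_general l D hD_open hD_conv v hdir
end

section
/- Let (X,d) be a metric space, x₀ ∈ X, and let F, G : X → X be 1-Lipschitz maps with F∘G = G∘F. Let r ≥ 0 be such that d(F(x₀), G(x₀)) ≥ d(F(x₀), x₀) + d(x₀, G(x₀)) − 2r. Put T₁ = d(F(x₀), F(G(x₀))) and T₂ = d(G(x₀), F(G(x₀))). Then T₂ ≤ d(x₀, F(x₀)) ≤ T₂ + 2r and T₁ ≤ d(x₀, G(x₀)) ≤ T₁ + 2r. -/
/-- For commuting 1-Lipschitz maps `F, G` on a metric space and `r ≥ 0` with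
`d(F(x₀), G(x₀)) ≥ d(F(x₀), x₀) + d(x₀, G(x₀)) − 2r`, setting `T₁ = d(F(x₀), F(G(x₀)))` and
`T₂ = d(G(x₀), F(G(x₀)))`, one has `T₂ ≤ d(x₀, F(x₀)) ∧ d(x₀, F(x₀)) ≤ T₂ + 2r` and
`T₁ ≤ d(x₀, G(x₀)) ≤ T₁ + 2r`. -/
theorem commuting_lipschitz_length_bounds {X : Type*} [MetricSpace X]
    (x₀ : X) (F G : X → X)
    (hF : LipschitzWith 1 F) (hG : LipschitzWith 1 G)
    (hcomm : F ∘ G = G ∘ F)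
    (r : ℝ) (hr : 0 ≤ r)
    (hdist : dist (F x₀) (G x₀) ≥ dist (F x₀) x₀ + dist x₀ (G x₀) - 2 * r) :
    (dist (G x₀) (F (G x₀)) ≤ dist x₀ (F x₀) ∧
      dist x₀ (F x₀) ≤ dist (G x₀) (F (G x₀)) + 2 * r) ∧
    (dist (F x₀) (F (G x₀)) ≤ dist x₀ (G x₀) ∧
      dist x₀ (G x₀) ≤ dist (F x₀) (F (G x₀)) + 2 * r) := by
  have hc : F (G x₀) = G (F x₀) := congrFun hcomm x₀
  have h1 : dist (F x₀) (F (G x₀)) ≤ dist x₀ (G x₀) := by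
    simpa using hF.dist_le_mul x₀ (G x₀)
  have h2 : dist (G x₀) (F (G x₀)) ≤ dist x₀ (F x₀) := by
    rw [hc]
    simpa using hG.dist_le_mul x₀ (F x₀)
  have htri : dist (F x₀) (G x₀) ≤ dist (F x₀) (F (G x₀)) + dist (G x₀) (F (G x₀)) := by
    simpa [dist_comm] using dist_triangle (F x₀) (F (G x₀)) (G x₀)
  have e1 : dist (F x₀) x₀ = dist x₀ (F x₀) := dist_comm _ _
  constructor <;> constructor <;> linarith
end

section
/- Let (X,d) be a geodesic metric space, x₀ ∈ X, and let f, g : X → X be 1-Lipschitz maps with f∘g = g∘f. Let r ≥ 0 be such that for all m, n ∈ ℕ every geodesic segment joining f^m(x₀) and g^n(x₀) meets the closed ball of radius r centered at x₀. Let R ≥ 0 be such that for any two (1,2r)-quasi-geodesic segments γ₁ : [a₁,b₁] → X and γ₂ : [a₂,b₂] → X with γ₁(a₁) = γ₂(a₂) and γ₁(b₁) = γ₂(b₂), every point of the image of γ₁ lies within distance R of the image of γ₂, and vice versa. Assume d(x₀, g^n(x₀)) → ∞ as n → ∞, and set C = d(x₀, g(x₀)). Then for every m ∈ ℕ there exists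 n ∈ ℕ with d(x₀, f^m(g^n(x₀))) ≤ 4r + 2R + C/2. -/
open Set Filter

/-- A geodesic segment in a metric space: a map `γ` which is an isometry from `[a,b] ⊆ ℝ`. -/
def IsGeodesicSegment {X : Type*} [MetricSpace X] (γ : ℝ → X) (a b : ℝ) : Prop :=
  a ≤ b ∧ ∀ s ∈ Set.Icc a b, ∀ t ∈ Set.Icc a b, dist (γ s) (γ t) = |s - t|

/-- An `(A,B)`-quasi-geodesic segment defined on `[a,b] ⊆ ℝ`. -/
def IsQuasiGeodesicSegment {X : Type*} [MetricSpace X] (A B : ℝ) (γ : ℝ → X) (a b : ℝ) : Prop :=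
  a ≤ b ∧ ∀ s ∈ Set.Icc a b, ∀ t ∈ Set.Icc a b,
    (1 / A) * |t - s| - B ≤ dist (γ s) (γ t) ∧ dist (γ s) (γ t) ≤ A * |t - s| + B

/-- Discrete intermediate value: a sequence starting at `0` with steps at most `C`
that reaches `D - C/2` has a value in `[D - C/2, D + C/2]`. -/
lemma exists_near_aux (u : ℕ → ℝ) (C D : ℝ) (hD : 0 ≤ D) (h0 : u 0 = 0)
    (hstep : ∀ k, u (k + 1) ≤ u k + C) (hub : ∃ n, D - C / 2 ≤ u n) :
    ∃ n, D - C / 2 ≤ u n ∧ u n ≤ D + C / 2 := by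
  classical
  refine ⟨Nat.find hub, Nat.find_spec hub, ?_⟩
  rcases Nat.eq_zero_or_pos (Nat.find hub) with h | h
  · rw [h, h0]
    have := Nat.find_spec hub
    rw [h, h0] at this
    linarith
  · have hk : ¬ (D - C / 2 ≤ u (Nat.find hub - 1)) :=
      Nat.find_min hub (Nat.sub_lt h one_pos)
    push_neg at hk
    have hs := hstep (Nat.find hub - 1)
    rw [Nat.sub_add_cancel h] at hs
    linarith

/-- The concatenation of two geodesic segments whose total length exceeds the distance
between the far endpoints by at most `2r` is a `(1, 2r)`-quasi-geodesic. -/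
lemma concat_quasi {X : Type*} [MetricSpace X] (α β : ℝ → X) (aα bα aβ bβ r : ℝ)
    (hr : 0 ≤ r)
    (hα : IsGeodesicSegment α aα bα) (hβ : IsGeodesicSegment β aβ bβ)
    (hjoin : α bα = β aβ)
    (hE : (bα - aα) + (bβ - aβ) ≤ dist (α aα) (β bβ) + 2 * r) :
    IsQuasiGeodesicSegment 1 (2 * r)
      (fun t => if t ≤ bα - aα then α (aα + t) else β (aβ + (t - (bα - aα))))
      0 ((bα - aα) + (bβ - aβ)) := by
  set L₁ := bα - aα with hL₁
  set L₂ := bβ - aβ with hL₂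
  have h1 : 0 ≤ L₁ := by simp [hL₁]; linarith [hα.1]
  have h2 : 0 ≤ L₂ := by simp [hL₂]; linarith [hβ.1]
  set γ₂ : ℝ → X := fun t => if t ≤ L₁ then α (aα + t) else β (aβ + (t - L₁)) with hγ₂
  have key : ∀ s ∈ Icc (0:ℝ) (L₁ + L₂), ∀ t ∈ Icc (0:ℝ) (L₁ + L₂), s ≤ t →
      t - s - 2 * r ≤ dist (γ₂ s) (γ₂ t) ∧ dist (γ₂ s) (γ₂ t) ≤ t - s + 2 * r := by
    intro s hs t ht hst
    by_cases hsL : s ≤ L₁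
    · by_cases htL : t ≤ L₁
      · -- both in α
        have hmem1 : aα + s ∈ Icc aα bα := ⟨by linarith [hs.1], by linarith⟩
        have hmem2 : aα + t ∈ Icc aα bα := ⟨by linarith [ht.1], by linarith⟩
        have hd : dist (γ₂ s) (γ₂ t) = t - s := by
          simp only [hγ₂, if_pos hsL, if_pos htL]
          rw [hα.2 _ hmem1 _ hmem2, abs_of_nonpos (by linarith)]
          ring
        rw [hd]; constructor <;> linarith
      · -- s in α, t in β
        push_neg at htL
        have hmem1 : aα + s ∈ Icc aα bα := ⟨by linarith [hs.1], by linarith⟩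
        have hmem2 : aβ + (t - L₁) ∈ Icc aβ bβ := ⟨by linarith, by linarith [ht.2]⟩
        have hbα : bα ∈ Icc aα bα := ⟨hα.1, le_refl _⟩
        have haα : aα ∈ Icc aα bα := ⟨le_refl _, hα.1⟩
        have haβ : aβ ∈ Icc aβ bβ := ⟨le_refl _, hβ.1⟩
        have hbβ : bβ ∈ Icc aβ bβ := ⟨hβ.1, le_refl _⟩
        have hd1 : dist (α (aα + s)) (α bα) = L₁ - s := by
          rw [hα.2 _ hmem1 _ hbα, abs_of_nonpos (by simp [hL₁]; linarith)]
          simp [hL₁]; ring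
        have hd2 : dist (β aβ) (β (aβ + (t - L₁))) = t - L₁ := by
          rw [hβ.2 _ haβ _ hmem2, abs_of_nonpos (by linarith)]
          ring
        have hd3 : dist (α aα) (α (aα + s)) = s := by
          rw [hα.2 _ haα _ hmem1, abs_of_nonpos (by linarith [hs.1])]
          ring
        have hd4 : dist (β (aβ + (t - L₁))) (β bβ) = L₂ - (t - L₁) := by
          rw [hβ.2 _ hmem2 _ hbβ, abs_of_nonpos (by simp [hL₂]; linarith [ht.2])]
          simp [hL₂]; ring
        have hgs : γ₂ s = α (aα + s) := by simp only [hγ₂, if_pos hsL]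
        have hgt : γ₂ t = β (aβ + (t - L₁)) := by simp only [hγ₂, if_neg (not_le.mpr htL)]
        rw [hgs, hgt]
        constructor
        · have htri : dist (α aα) (β bβ) ≤
              dist (α aα) (α (aα + s)) + dist (α (aα + s)) (β (aβ + (t - L₁)))
              + dist (β (aβ + (t - L₁))) (β bβ) := dist_triangle4 _ _ _ _
          rw [hd3, hd4] at htri
          linarith
        · have htri : dist (α (aα + s)) (β (aβ + (t - L₁))) ≤
              dist (α (aα + s)) (α bα) + dist (β aβ) (β (aβ + (t - L₁))) := by
            calc dist (α (aα + s)) (β (aβ + (t - L₁)))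
                ≤ dist (α (aα + s)) (α bα) + dist (α bα) (β (aβ + (t - L₁))) :=
                  dist_triangle _ _ _
              _ = dist (α (aα + s)) (α bα) + dist (β aβ) (β (aβ + (t - L₁))) := by
                  rw [hjoin]
          rw [hd1, hd2] at htri
          linarith
    · -- both in β
      push_neg at hsL
      have htL : ¬ t ≤ L₁ := not_le.mpr (lt_of_lt_of_le hsL hst)
      have hmem1 : aβ + (s - L₁) ∈ Icc aβ bβ := ⟨by linarith, by linarith [hs.2]⟩
      have hmem2 : aβ + (t - L₁) ∈ Icc aβ bβ := ⟨by linarith, by linarith [ht.2]⟩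
      have hd : dist (γ₂ s) (γ₂ t) = t - s := by
        simp only [hγ₂, if_neg (not_le.mpr hsL), if_neg htL]
        rw [hβ.2 _ hmem1 _ hmem2, abs_of_nonpos (by linarith)]
        ring
      rw [hd]; constructor <;> linarith
  refine ⟨by linarith, ?_⟩
  intro s hs t ht
  have hone : (1:ℝ) / 1 = 1 := by norm_num
  rcases le_total s t with h | h
  · have hk := key s hs t ht h
    rw [abs_of_nonneg (by linarith : (0:ℝ) ≤ t - s), hone, one_mul]
    exact ⟨by linarith [hk.1], by linarith [hk.2]⟩
  · have hk := key t ht s hs h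
    rw [dist_comm, abs_of_nonpos (by linarith : t - s ≤ 0), hone, one_mul]
    exact ⟨by linarith [hk.1], by linarith [hk.2]⟩

/-- Quantitative core of Proposition 4.1: for commuting 1-Lipschitz maps
`f, g` on a geodesic metric space, if every geodesic from `f^m(x₀)` to `g^n(x₀)` meets
`closedBall x₀ r`, `R` is a shadowing constant for `(1,2r)`-quasi-geodesics, and
`d(x₀, g^n(x₀)) → ∞`, then with `C = d(x₀, g(x₀))` every `m` admits an `n` with
`d(x₀, f^m(g^n(x₀))) ≤ 4r + 2R + C/2`. -/
theorem commuting_orbit_returns {X : Type*} [MetricSpace X]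
    (hgeo : ∀ x y : X, ∃ (γ : ℝ → X) (a b : ℝ),
      IsGeodesicSegment γ a b ∧ γ a = x ∧ γ b = y)
    (x₀ : X) (f g : X → X)
    (hf : LipschitzWith 1 f) (hg : LipschitzWith 1 g)
    (hcomm : f ∘ g = g ∘ f)
    (r : ℝ) (hr : 0 ≤ r)
    (hmeet : ∀ (m n : ℕ) (γ : ℝ → X) (a b : ℝ), IsGeodesicSegment γ a b →
      γ a = f^[m] x₀ → γ b = g^[n] x₀ → ∃ t ∈ Set.Icc a b, γ t ∈ Metric.closedBall x₀ r)
    (R : ℝ) (hR : 0 ≤ R)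
    (hshadow : ∀ (γ₁ γ₂ : ℝ → X) (a₁ b₁ a₂ b₂ : ℝ),
      IsQuasiGeodesicSegment 1 (2 * r) γ₁ a₁ b₁ →
      IsQuasiGeodesicSegment 1 (2 * r) γ₂ a₂ b₂ →
      γ₁ a₁ = γ₂ a₂ → γ₁ b₁ = γ₂ b₂ →
      (∀ t ∈ Set.Icc a₁ b₁, ∃ s ∈ Set.Icc a₂ b₂, dist (γ₁ t) (γ₂ s) ≤ R) ∧
      (∀ t ∈ Set.Icc a₂ b₂, ∃ s ∈ Set.Icc a₁ b₁, dist (γ₂ t) (γ₁ s) ≤ R))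
    (hdiv : Tendsto (fun n : ℕ => dist x₀ (g^[n] x₀)) atTop atTop) :
    ∀ m : ℕ, ∃ n : ℕ,
      dist x₀ (f^[m] (g^[n] x₀)) ≤ 4 * r + 2 * R + dist x₀ (g x₀) / 2 := by
  classical
  intro m
  set C : ℝ := dist x₀ (g x₀) with hC
  set D : ℝ := dist x₀ (f^[m] x₀) with hD
  -- 1-Lipschitz iterates
  have hlip : ∀ (h : X → X), LipschitzWith 1 h → ∀ (k : ℕ) (x y : X),
      dist (h^[k] x) (h^[k] y) ≤ dist x y := by
    intro h hh k x y
    have := (hh.iterate k).dist_le_mul x y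
    simpa using this
  -- choose n with dist x₀ (g^[n] x₀) within C/2 of D
  obtain ⟨n, hn1, hn2⟩ := exists_near_aux (fun n => dist x₀ (g^[n] x₀)) C D dist_nonneg
    (by simp)
    (by
      intro k
      have h1 : dist x₀ (g^[k+1] x₀) ≤ dist x₀ (g^[k] x₀) + dist (g^[k] x₀) (g^[k+1] x₀) :=
        dist_triangle _ _ _
      have h2 : dist (g^[k] x₀) (g^[k+1] x₀) ≤ C := by
        rw [Function.iterate_succ_apply]
        exact hlip g hg k x₀ (g x₀)
      simpa using h1.trans (by linarith))
    ((hdiv.eventually_ge_atTop (D - C / 2)).exists)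
  refine ⟨n, ?_⟩
  set dn : ℝ := dist x₀ (g^[n] x₀) with hdn
  set z : X := f^[m] (g^[n] x₀) with hz
  -- commuting iterates
  have hcom : Function.Commute f g := fun x => congrFun hcomm x
  have hzz : z = g^[n] (f^[m] x₀) := ((hcom.iterate_left m).iterate_right n) x₀
  have hz1 : dist (f^[m] x₀) z ≤ dn := hlip f hf m x₀ (g^[n] x₀)
  have hz2 : dist z (g^[n] x₀) ≤ D := by
    rw [hzz, hD]
    calc dist (g^[n] (f^[m] x₀)) (g^[n] x₀) ≤ dist (f^[m] x₀) x₀ := hlip g hg n _ x₀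
      _ = dist x₀ (f^[m] x₀) := dist_comm _ _
  -- the geodesic from f^[m] x₀ to g^[n] x₀ and its point near x₀
  obtain ⟨γ, a, b, hγ, hγa, hγb⟩ := hgeo (f^[m] x₀) (g^[n] x₀)
  obtain ⟨t₀, ht₀I, ht₀B⟩ := hmeet m n γ a b hγ hγa hγb
  have ht₀ : dist (γ t₀) x₀ ≤ r := Metric.mem_closedBall.mp ht₀B
  have hab : a ≤ b := hγ.1
  have haI : a ∈ Icc a b := ⟨le_refl _, hab⟩
  have hbI : b ∈ Icc a b := ⟨hab, le_refl _⟩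
  have hdat : dist (γ a) (γ t₀) = t₀ - a := by
    rw [hγ.2 _ haI _ ht₀I, abs_of_nonpos (by linarith [ht₀I.1])]; ring
  have hdtb : dist (γ t₀) (γ b) = b - t₀ := by
    rw [hγ.2 _ ht₀I _ hbI, abs_of_nonpos (by linarith [ht₀I.2])]; ring
  have hdab : dist (γ a) (γ b) = b - a := by
    rw [hγ.2 _ haI _ hbI, abs_of_nonpos (by linarith)]; ring
  -- lower bounds for the pieces of γ
  have hta1 : D - r ≤ t₀ - a := by
    have : D ≤ dist x₀ (γ t₀) + dist (γ t₀) (γ a) := by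
      rw [hD, ← hγa]; exact dist_triangle _ _ _
    rw [dist_comm (γ t₀) (γ a), hdat, dist_comm x₀ (γ t₀)] at this
    linarith
  have hta2 : t₀ - a ≤ D + r := by
    have : dist (γ a) (γ t₀) ≤ dist (γ a) x₀ + dist x₀ (γ t₀) := dist_triangle _ _ _
    rw [hdat, hγa, dist_comm (f^[m] x₀) x₀, dist_comm x₀ (γ t₀)] at this
    linarith [hD]
  have htb1 : dn - r ≤ b - t₀ := by
    have : dn ≤ dist x₀ (γ t₀) + dist (γ t₀) (γ b) := by
      rw [hdn, ← hγb]; exact dist_triangle _ _ _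
    rw [hdtb, dist_comm x₀ (γ t₀)] at this
    linarith
  -- the two auxiliary geodesics through z
  obtain ⟨α, aα, bα, hα, hαa, hαb⟩ := hgeo (f^[m] x₀) z
  obtain ⟨β, aβ, bβ, hβ, hβa, hβb⟩ := hgeo z (g^[n] x₀)
  have haαI : aα ∈ Icc aα bα := ⟨le_refl _, hα.1⟩
  have hbαI : bα ∈ Icc aα bα := ⟨hα.1, le_refl _⟩
  have haβI : aβ ∈ Icc aβ bβ := ⟨le_refl _, hβ.1⟩
  have hbβI : bβ ∈ Icc aβ bβ := ⟨hβ.1, le_refl _⟩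
  have hL1 : bα - aα = dist (f^[m] x₀) z := by
    rw [← hαa, ← hαb, hα.2 _ haαI _ hbαI, abs_of_nonpos (by linarith [hα.1])]; ring
  have hL2 : bβ - aβ = dist z (g^[n] x₀) := by
    rw [← hβa, ← hβb, hβ.2 _ haβI _ hbβI, abs_of_nonpos (by linarith [hβ.1])]; ring
  have hjoin : α bα = β aβ := by rw [hαb, hβa]
  have hfar : dist (α aα) (β bβ) = b - a := by rw [hαa, hβb, ← hγa, ← hγb, hdab]
  -- excess bound
  have hE : (bα - aα) + (bβ - aβ) ≤ dist (α aα) (β bβ) + 2 * r := by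
    rw [hfar, hL1, hL2]
    have hba : D + dn - 2 * r ≤ b - a := by linarith
    linarith
  have hq2 := concat_quasi α β aα bα aβ bβ r hr hα hβ hjoin hE
  set L₁ := bα - aα with hL₁d
  set L₂ := bβ - aβ with hL₂d
  set γ₂ : ℝ → X := fun t => if t ≤ L₁ then α (aα + t) else β (aβ + (t - L₁)) with hγ₂d
  have h1 : 0 ≤ L₁ := by rw [hL₁d]; linarith [hα.1]
  have h2 : 0 ≤ L₂ := by rw [hL₂d]; linarith [hβ.1]
  -- γ itself is a (1, 2r)-quasi-geodesic
  have hq1 : IsQuasiGeodesicSegment 1 (2 * r) γ a b := by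
    refine ⟨hab, ?_⟩
    intro s hs t ht
    rw [hγ.2 _ hs _ ht, abs_sub_comm s t]
    constructor
    · have : (1:ℝ)/1 = 1 := by norm_num
      rw [this, one_mul]; linarith
    · rw [one_mul]; linarith
  -- endpoints of γ₂
  have he0 : γ₂ 0 = γ a := by
    simp only [hγ₂d, if_pos h1]
    rw [add_zero, hαa, hγa]
  have he1 : γ₂ (L₁ + L₂) = γ b := by
    rcases eq_or_lt_of_le h2 with h2' | h2'
    · have hcond : L₁ + L₂ ≤ L₁ := by linarith
      simp only [hγ₂d, if_pos hcond]
      have h3 : aα + (L₁ + L₂) = bα := by rw [hL₁d, ← h2']; ring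
      have h4 : z = g^[n] x₀ := by
        have : dist z (g^[n] x₀) = 0 := by rw [← hL2, ← h2']
        exact dist_eq_zero.mp this
      rw [h3, hαb, h4, hγb]
    · have hcond : ¬ (L₁ + L₂ ≤ L₁) := by linarith
      simp only [hγ₂d, if_neg hcond]
      have : aβ + (L₁ + L₂ - L₁) = bβ := by rw [hL₂d]; ring
      rw [this, hβb, hγb]
  have hzL : γ₂ L₁ = z := by
    simp only [hγ₂d, if_pos (le_refl L₁)]
    have : aα + L₁ = bα := by rw [hL₁d]; ring
    rw [this, hαb]
  -- shadowing
  obtain ⟨hsh1, _⟩ := hshadow γ₂ γ 0 (L₁ + L₂) a b hq2 hq1 he0 he1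
  obtain ⟨s, hsI, hsR⟩ := hsh1 L₁ ⟨h1, by linarith⟩
  rw [hzL] at hsR
  -- bounds on s
  have hdas : dist (γ a) (γ s) = s - a := by
    rw [hγ.2 _ haI _ hsI, abs_of_nonpos (by linarith [hsI.1])]; ring
  have hdsb : dist (γ s) (γ b) = b - s := by
    rw [hγ.2 _ hsI _ hbI, abs_of_nonpos (by linarith [hsI.2])]; ring
  have hs1 : s - a ≤ dn + R := by
    have : dist (γ a) (γ s) ≤ dist (γ a) z + dist z (γ s) := dist_triangle _ _ _
    rw [hdas, hγa] at this
    linarith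
  have hs2 : b - s ≤ D + R := by
    have : dist (γ s) (γ b) ≤ dist (γ s) z + dist z (γ b) := dist_triangle _ _ _
    rw [hdsb, hγb, dist_comm (γ s) z] at this
    linarith
  -- |t₀ - s| ≤ C/2 + R + r
  have habs : |t₀ - s| ≤ C / 2 + R + r := by
    rw [abs_le]
    constructor
    · -- s - t₀ ≤ C/2 + R + r, i.e. -(C/2+R+r) ≤ t₀ - s
      have : s - t₀ = (s - a) - (t₀ - a) := by ring
      nlinarith [hs1, hta1, hn2]
    · have : t₀ - s = (b - s) - (b - t₀) := by ring
      nlinarith [hs2, htb1, hn1]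
  have hts : dist (γ t₀) (γ s) = |t₀ - s| := hγ.2 _ ht₀I _ hsI
  -- final assembly
  have hfin : dist x₀ z ≤ dist x₀ (γ t₀) + dist (γ t₀) (γ s) + dist (γ s) z :=
    dist_triangle4 _ _ _ _
  rw [hts, dist_comm x₀ (γ t₀), dist_comm (γ s) z] at hfin
  have : dist x₀ z ≤ r + (C / 2 + R + r) + R := by linarith
  calc dist x₀ (f^[m] (g^[n] x₀)) = dist x₀ z := by rw [hz]
    _ ≤ r + (C / 2 + R + r) + R := this
    _ ≤ 4 * r + 2 * R + C / 2 := by linarith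
end

section
/- Let (X,d) be a proper geodesic metric space and let f, g : X → X be 1-Lipschitz maps with f∘g = g∘f. Suppose there is x₀ ∈ X with d(x₀, f^m(x₀)) → ∞ and d(x₀, g^n(x₀)) → ∞, and suppose there is a nonempty compact set K ⊆ X such that for every m ∈ ℕ there exists n ∈ ℕ with K ∩ (f^m ∘ g^n)(K) ≠ ∅. Then there exist a nonempty closed set M ⊆ X and a 1-Lipschitz map ρ : X → X such that: ρ∘ρ = ρ and the range of ρ equals M; ρ∘f = f∘ρ and ρ∘g = g∘ρ; f(M) = M and g(M) = M; the restrictions of f and g to M are surjective isometries of M (d(f(x),f(y)) = d(x,y) and d(g(x),g(y)) = d(x,y) for all x,y ∈ M); and M is totally geodesic: any two points of M are joined by a geodesic segment of X whose image is contained in M. -/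
/-!
Write `T (a, b) = f^[a] ∘ g^[b]` (`pairIterate f g (a, b)`). The return hypothesis gives words
`(m, n m)` moving `x₀` a bounded distance. Since the `g`-orbit escapes, two such words with the
same `f`-exponent have `g`-exponents a bounded distance apart, so `n` is a quasi-morphism:
`n m = α m + O(1)`, with `α > 0` because the `f`-orbit escapes. Hence every word `(a, b)` with
`|b - α a|` bounded moves `x₀` a bounded distance. Dirichlet approximation yields words `A j`
whose finite sums all satisfy `|b - α a| ≤ 1`, and Hindman's theorem an idempotent ultrafilter `U`
concentrated on these sums. In the proper space `X`, `ρ x = lim_U T s x` exists; it is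
1-Lipschitz and commutes with `f` and `g`, and `U + U = U` makes it a retraction. As `U`-almost
every word factors through `f` and through `g`, both act on `M = range ρ` as surjective
isometries, and `ρ` maps a geodesic between points of `M` to a geodesic in `M`.
-/

open Set Filter

open Topology

attribute [local instance] Ultrafilter.add Ultrafilter.addSemigroup

section Displacement

variable {X : Type*} [PseudoMetricSpace X] {h : X → X}

theorem LipschitzWith.dist_le {Y : Type*} [PseudoMetricSpace Y] {φ : X → Y}
    (hφ : LipschitzWith 1 φ) (x y : X) : dist (φ x) (φ y) ≤ dist x y := by
  simpa using hφ.dist_le_mul x y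

theorem LipschitzWith.dist_apply_le_two_mul_add (hh : LipschitzWith 1 h) (x y : X) :
    dist x (h x) ≤ 2 * dist x y + dist y (h y) := by
  linarith [dist_triangle4 x y (h y) (h x), hh.dist_le y x, dist_comm x y]

theorem LipschitzWith.dist_iterate_le (hh : LipschitzWith 1 h) (x : X) (n : ℕ) :
    dist x (h^[n] x) ≤ n * dist x (h x) := by
  induction n with
  | zero => simp
  | succ n ih =>
    have := (hh.iterate n).dist_le_mul x (h x)
    simp only [one_pow, NNReal.coe_one, one_mul] at this
    rw [Function.iterate_succ_apply]
    push_cast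
    linarith [dist_triangle x (h^[n] x) (h^[n] (h x))]

theorem LipschitzWith.dist_comp_apply_le {h' : X → X} (hh : LipschitzWith 1 h) (x : X) :
    dist (h (h' x)) x ≤ dist (h' x) x + dist (h x) x := by
  linarith [dist_triangle (h (h' x)) (h x) x, hh.dist_le (h' x) x]

theorem LipschitzWith.dist_apply_le_of_mem_closedBall (hh : LipschitzWith 1 h) {x k : X} {r : ℝ}
    (hk : k ∈ Metric.closedBall x r) (hhk : h k ∈ Metric.closedBall x r) :
    dist (h x) x ≤ 2 * r := by
  rw [Metric.mem_closedBall] at hk hhk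
  linarith [dist_triangle (h x) (h k) x, hh.dist_le x k, dist_comm x k]

end Displacement

theorem IsGeodesicSegment.lipschitzWith_one_comp {X : Type*} [MetricSpace X] {γ : ℝ → X}
    {a b : ℝ} (hγ : IsGeodesicSegment γ a b) {ρ : X → X} (hρ : LipschitzWith 1 ρ)
    (ha : ρ (γ a) = γ a) (hb : ρ (γ b) = γ b) : IsGeodesicSegment (ρ ∘ γ) a b := by
  obtain ⟨hab, hγ⟩ := hγ
  have hdist : ∀ s ∈ Icc a b, ∀ t ∈ Icc a b, dist (ρ (γ s)) (ρ (γ t)) ≤ |s - t| :=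
    fun s hs t ht => (hρ.dist_le _ _).trans_eq (hγ s hs t ht)
  have hA : a ∈ Icc a b := ⟨le_rfl, hab⟩
  have hB : b ∈ Icc a b := ⟨hab, le_rfl⟩
  -- a shortcut between `ρ (γ s)` and `ρ (γ t)` would shorten the geodesic from `γ a` to `γ b`
  have key : ∀ s ∈ Icc a b, ∀ t ∈ Icc a b, s ≤ t → dist (ρ (γ s)) (ρ (γ t)) = |s - t| := by
    intro s hs t ht hst
    refine le_antisymm (hdist s hs t ht) ?_
    have h := dist_triangle4 (ρ (γ a)) (ρ (γ s)) (ρ (γ t)) (ρ (γ b))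
    rw [ha, hb, hγ a hA b hB] at h
    have h1 := hdist a hA s hs
    have h2 := hdist t ht b hB
    rw [ha] at h1; rw [hb] at h2
    rw [abs_of_nonpos (by linarith)] at h ⊢
    rw [abs_of_nonpos (by linarith [hs.1])] at h1
    rw [abs_of_nonpos (by linarith [ht.2])] at h2
    linarith
  refine ⟨hab, fun s hs t ht => ?_⟩
  rcases le_total s t with hst | hst
  · exact key s hs t ht hst
  · rw [Function.comp_apply, Function.comp_apply, dist_comm, abs_sub_comm]
    exact key t ht s hs hst

theorem exists_isGeodesicSegment_mem_range {X : Type*} [MetricSpace X]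
    (hgeo : ∀ x y : X, ∃ (γ : ℝ → X) (a b : ℝ), IsGeodesicSegment γ a b ∧ γ a = x ∧ γ b = y)
    {ρ : X → X} (hρ : LipschitzWith 1 ρ) (hρρ : ρ ∘ ρ = ρ) {x y : X} (hx : x ∈ range ρ)
    (hy : y ∈ range ρ) : ∃ (γ : ℝ → X) (a b : ℝ),
      IsGeodesicSegment γ a b ∧ γ a = x ∧ γ b = y ∧ ∀ t ∈ Icc a b, γ t ∈ range ρ := by
  obtain ⟨x, rfl⟩ := hx
  obtain ⟨y, rfl⟩ := hy
  obtain ⟨γ, a, b, hγ, ha, hb⟩ := hgeo (ρ x) (ρ y)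
  have hfix : ∀ z, ρ (ρ z) = ρ z := congrFun hρρ
  refine ⟨ρ ∘ γ, a, b, hγ.lipschitzWith_one_comp hρ ?_ ?_, ?_, ?_, fun t _ => ⟨γ t, rfl⟩⟩ <;>
    simp only [Function.comp_apply, ha, hb, hfix]

theorem isClosed_range_of_comp_self {X : Type*} [TopologicalSpace X] [T2Space X] {ρ : X → X}
    (hρ : Continuous ρ) (hρρ : ρ ∘ ρ = ρ) : IsClosed (range ρ) := by
  convert isClosed_fixedPoints hρ
  ext x
  exact ⟨fun ⟨y, hy⟩ => hy ▸ congrFun hρρ y, fun hx => ⟨x, hx⟩⟩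

section UltrafilterLimit

variable {ι X : Type*} [MetricSpace X] {U : Ultrafilter ι}

theorem exists_tendsto_of_eventually_dist_le [ProperSpace X] {u : ι → X} {x : X} {R : ℝ}
    (h : ∀ᶠ i in U, dist (u i) x ≤ R) : ∃ y, Tendsto u U (𝓝 y) := by
  obtain ⟨y, -, hy⟩ := (isCompact_closedBall x R).ultrafilter_le_nhds (U.map u)
    (le_principal_iff.mpr h)
  exact ⟨y, hy⟩

theorem exists_forall_tendsto_of_eventually_dist_le [ProperSpace X] {T : ι → X → X}
    (hT : ∀ i, LipschitzWith 1 (T i)) (x₀ : X) {B : ℝ} (hB : ∀ᶠ i in U, dist (T i x₀) x₀ ≤ B) :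
    ∃ ρ : X → X, ∀ x, Tendsto (T · x) U (𝓝 (ρ x)) := by
  suffices ∀ x, ∃ y, Tendsto (T · x) U (𝓝 y) by choose ρ hρ using this; exact ⟨ρ, hρ⟩
  intro x
  refine exists_tendsto_of_eventually_dist_le (R := dist x x₀ + B) (x := x₀)
    (hB.mono fun i hi => ?_)
  linarith [dist_triangle (T i x) (T i x₀) x₀, (hT i).dist_le x x₀]

theorem lipschitzWith_one_of_tendsto {T : ι → X → X} {ρ : X → X}
    (hT : ∀ i, LipschitzWith 1 (T i)) (hρ : ∀ x, Tendsto (T · x) U (𝓝 (ρ x))) :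
    LipschitzWith 1 ρ :=
  LipschitzWith.mk_one fun x y =>
    le_of_tendsto ((hρ x).dist (hρ y)) (Eventually.of_forall fun i => (hT i).dist_le x y)

end UltrafilterLimit

section ActionLimit

variable {M X : Type*} [AddCommMonoid M] [MetricSpace X] {U : Ultrafilter M} {T : M → X → X}
  {ρ : X → X}

theorem comp_comm_of_tendsto (hT : ∀ s, LipschitzWith 1 (T s))
    (hadd : ∀ s t, T (s + t) = T s ∘ T t) (hρ : ∀ x, Tendsto (T · x) U (𝓝 (ρ x))) (e : M) :
    ρ ∘ T e = T e ∘ ρ := by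
  funext x
  have hcomm : ∀ s, T s (T e x) = T e (T s x) := fun s => by
    rw [← Function.comp_apply (f := T s), ← hadd, add_comm, hadd, Function.comp_apply]
  refine tendsto_nhds_unique (hρ (T e x)) ?_
  simp only [hcomm, Function.comp_apply]
  exact ((hT e).continuous.tendsto (ρ x)).comp (hρ x)

theorem comp_self_of_tendsto (hT : ∀ s, LipschitzWith 1 (T s))
    (hadd : ∀ s t, T (s + t) = T s ∘ T t) (hU : U + U = U)
    (hρ : ∀ x, Tendsto (T · x) U (𝓝 (ρ x))) : ρ ∘ ρ = ρ := by
  funext x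
  refine tendsto_nhds_unique (hρ (ρ x)) (Metric.tendsto_nhds.mpr fun ε hε => ?_)
  -- `ρ x` is also the limit along `U + U`, i.e. the iterated limit of `T s (T t x)`
  have h : ∀ᶠ u in (↑(U + U) : Filter M), dist (T u x) (ρ x) < ε / 2 := by
    rw [hU]; exact Metric.tendsto_nhds.mp (hρ x) _ (half_pos hε)
  rw [Ultrafilter.eventually_add] at h
  filter_upwards [h] with s hs
  have hlim : Tendsto (fun t => dist (T (s + t) x) (ρ x)) U (𝓝 (dist (T s (ρ x)) (ρ x))) := by
    simp only [hadd, Function.comp_apply]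
    exact (((hT s).continuous.tendsto _).comp (hρ x)).dist tendsto_const_nhds
  linarith [le_of_tendsto hlim (hs.mono fun t ht => ht.le)]

variable [PartialOrder M] [CanonicallyOrderedAdd M] [Sub M] [OrderedSub M]

theorem dist_le_dist_apply_of_tendsto (hT : ∀ s, LipschitzWith 1 (T s))
    (hadd : ∀ s t, T (s + t) = T s ∘ T t) (hρ : ∀ x, Tendsto (T · x) U (𝓝 (ρ x))) {e : M}
    (he : ∀ᶠ s in U, e ≤ s) (x y : X) : dist (ρ x) (ρ y) ≤ dist (T e x) (T e y) := by
  refine le_of_tendsto ((hρ x).dist (hρ y)) (he.mono fun s hs => ?_)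
  rw [← tsub_add_cancel_of_le hs, hadd]
  exact (hT _).dist_le _ _

theorem exists_apply_eq_of_tendsto [ProperSpace X] (hT : ∀ s, LipschitzWith 1 (T s))
    (hadd : ∀ s t, T (s + t) = T s ∘ T t) (hρ : ∀ x, Tendsto (T · x) U (𝓝 (ρ x))) {e : M}
    (he : ∀ᶠ s in U, e ≤ s) (x : X) : ∃ y, T e y = ρ x := by
  have hfac : ∀ᶠ s in U, T s = T e ∘ T (s - e) ∧ T s = T (s - e) ∘ T e :=
    he.mono fun s hs => ⟨by rw [← hadd, add_tsub_cancel_of_le hs],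
      by rw [← hadd, tsub_add_cancel_of_le hs]⟩
  have hbdd : ∀ᶠ s in U, dist (T (s - e) x) (ρ x) ≤ dist x (T e x) + 1 := by
    filter_upwards [hfac, Metric.tendsto_nhds.mp (hρ x) 1 one_pos] with s hs hs1
    have := dist_triangle (T (s - e) x) (T s x) (ρ x)
    rw [hs.2, Function.comp_apply] at this hs1
    linarith [(hT (s - e)).dist_le x (T e x)]
  obtain ⟨y, hy⟩ := exists_tendsto_of_eventually_dist_le hbdd
  refine ⟨y, tendsto_nhds_unique ?_ (hρ x)⟩
  refine (((hT e).continuous.tendsto y).comp hy).congr' (hfac.mono fun s hs => ?_)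
  simp only [Function.comp_apply, hs.1]

theorem image_range_eq_of_tendsto [ProperSpace X] (hT : ∀ s, LipschitzWith 1 (T s))
    (hadd : ∀ s t, T (s + t) = T s ∘ T t) (hρ : ∀ x, Tendsto (T · x) U (𝓝 (ρ x)))
    (hρρ : ρ ∘ ρ = ρ) {e : M} (he : ∀ᶠ s in U, e ≤ s) : T e '' range ρ = range ρ := by
  have hcomm := congrFun (comp_comm_of_tendsto hT hadd hρ e)
  refine Subset.antisymm ?_ fun _ ⟨x, hx⟩ => ?_
  · rintro _ ⟨_, ⟨x, rfl⟩, rfl⟩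
    exact ⟨T e x, hcomm x⟩
  · obtain ⟨y, hy⟩ := exists_apply_eq_of_tendsto hT hadd hρ he x
    refine ⟨ρ y, ⟨y, rfl⟩, ?_⟩
    rw [← hx, ← congrFun hρρ x, Function.comp_apply, ← hy]
    exact (hcomm y).symm

theorem dist_apply_eq_of_tendsto (hT : ∀ s, LipschitzWith 1 (T s))
    (hadd : ∀ s t, T (s + t) = T s ∘ T t) (hρ : ∀ x, Tendsto (T · x) U (𝓝 (ρ x)))
    (hρρ : ρ ∘ ρ = ρ) {e : M} (he : ∀ᶠ s in U, e ≤ s) {x y : X} (hx : x ∈ range ρ)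
    (hy : y ∈ range ρ) : dist (T e x) (T e y) = dist x y := by
  obtain ⟨x, rfl⟩ := hx
  obtain ⟨y, rfl⟩ := hy
  refine le_antisymm ((hT e).dist_le _ _) ?_
  simpa only [← Function.comp_apply (f := ρ), hρρ] using
    dist_le_dist_apply_of_tendsto hT hadd hρ he (ρ x) (ρ y)

end ActionLimit

def pairIterate {α : Type*} (f g : α → α) (s : ℕ × ℕ) : α → α := f^[s.1] ∘ g^[s.2]

section PairIterate

variable {α : Type*} {f g : α → α}

@[simp]
theorem pairIterate_mk (m n : ℕ) : pairIterate f g (m, n) = f^[m] ∘ g^[n] := rfl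

theorem Function.Commute.pairIterate_add (h : Function.Commute f g) (s t : ℕ × ℕ) :
    pairIterate f g (s + t) = pairIterate f g s ∘ pairIterate f g t := by
  funext x
  simp only [pairIterate, Prod.fst_add, Prod.snd_add, Function.comp_apply,
    Function.iterate_add_apply, (h.iterate_iterate t.1 s.2).eq]

theorem LipschitzWith.pairIterate {X : Type*} [PseudoMetricSpace X] {f g : X → X}
    (hf : LipschitzWith 1 f) (hg : LipschitzWith 1 g) (s : ℕ × ℕ) :
    LipschitzWith 1 (pairIterate f g s) := by
  show LipschitzWith 1 (f^[s.1] ∘ g^[s.2])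
  simpa using (hf.iterate s.1).comp (hg.iterate s.2)

end PairIterate

theorem Subadditive.bddBelow_of_add_nonneg {v w : ℕ → ℝ} (hw : Subadditive w)
    (hvw : ∀ m, 0 ≤ v m + w m) : BddBelow (range fun m => v m / m) := by
  refine ⟨-(|w 1| + |w 0|), ?_⟩
  rintro _ ⟨m, rfl⟩
  rcases Nat.eq_zero_or_pos m with rfl | hm
  · simp only [Nat.cast_zero, div_zero, neg_nonpos]; positivity
  have hm' : (1 : ℝ) ≤ m := by exact_mod_cast hm
  have hwm : w m ≤ m * w 1 + w 0 := by simpa using hw.apply_mul_add_le m 1 0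
  rw [le_div_iff₀ (by linarith)]
  nlinarith [hvw m, le_abs_self (w 1), le_abs_self (w 0), neg_abs_le (w 1), abs_nonneg (w 0)]

theorem exists_abs_sub_mul_le_of_abs_add_sub_le {u : ℕ → ℝ} {c : ℝ}
    (hu : ∀ m n, |u (m + n) - u m - u n| ≤ c) : ∃ α, ∀ m, |u m - α * m| ≤ c := by
  have hc : 0 ≤ c := (abs_nonneg _).trans (hu 0 0)
  have hupper : Subadditive (fun m => u m + c) := fun m n => by
    linarith [(abs_le.mp (hu m n)).2]
  have hlower : Subadditive (fun m => c - u m) := fun m n => by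
    linarith [(abs_le.mp (hu m n)).1]
  have hbdd₁ := hlower.bddBelow_of_add_nonneg (v := fun m => u m + c) fun m => by linarith
  have hbdd₂ := hupper.bddBelow_of_add_nonneg (v := fun m => c - u m) fun m => by linarith
  have hsum : hupper.lim + hlower.lim = 0 := by
    refine tendsto_nhds_unique ((hupper.tendsto_lim hbdd₁).add (hlower.tendsto_lim hbdd₂)) ?_
    convert tendsto_const_div_atTop_nhds_zero_nat (c + c) using 2 with m
    rw [← add_div]
    ring
  refine ⟨hupper.lim, fun m => ?_⟩
  rcases Nat.eq_zero_or_pos m with rfl | hm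
  · simpa using hu 0 0
  have hm' : (0 : ℝ) < m := by exact_mod_cast hm
  have h₁ := hupper.lim_le_div hbdd₁ hm.ne'
  have h₂ := hlower.lim_le_div hbdd₂ hm.ne'
  rw [le_div_iff₀ hm'] at h₁ h₂
  rw [abs_le]
  constructor <;> nlinarith

section Slope

variable {X : Type*} [PseudoMetricSpace X] {f g : X → X} {x₀ : X}

theorem dist_pairIterate_le (hf : LipschitzWith 1 f) (hg : LipschitzWith 1 g) (a b b' : ℕ)
    (x : X) :
    dist (pairIterate f g (a, b) x) (pairIterate f g (a, b') x) ≤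
      |(b : ℝ) - b'| * dist x (g x) := by
  wlog h : b ≤ b' generalizing b b'
  · rw [dist_comm, abs_sub_comm]; exact this b' b (le_of_not_ge h)
  obtain ⟨q, rfl⟩ := Nat.exists_eq_add_of_le h
  have hq : pairIterate f g (a, b + q) x = pairIterate f g (a, b) (g^[q] x) := by
    simp [Function.iterate_add_apply]
  rw [hq, show (b : ℝ) - ↑(b + q) = -q by push_cast; ring, abs_neg, Nat.abs_cast]
  exact ((hf.pairIterate hg _).dist_le _ _).trans (hg.dist_iterate_le x q)

theorem exists_abs_snd_sub_le_of_dist_le (hg : LipschitzWith 1 g) (hc : Function.Commute f g)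
    (hgdiv : Tendsto (fun q : ℕ => dist x₀ (g^[q] x₀)) atTop atTop)
    (C : ℝ) : ∃ q₀ : ℕ, ∀ a b b' : ℕ, dist (pairIterate f g (a, b) x₀) x₀ ≤ C →
      dist (pairIterate f g (a, b') x₀) x₀ ≤ C → |(b : ℝ) - b'| ≤ q₀ := by
  obtain ⟨q₀, hq₀⟩ := eventually_atTop.mp (hgdiv.eventually_gt_atTop (4 * C))
  refine ⟨q₀, fun a b b' hb hb' => ?_⟩
  wlog h : b ≤ b' generalizing b b'
  · rw [abs_sub_comm]; exact this b' b hb' hb (le_of_not_ge h)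
  obtain ⟨q, rfl⟩ := Nat.exists_eq_add_of_le' h
  have hy : g^[q] (pairIterate f g (a, b) x₀) = pairIterate f g (a, q + b) x₀ := by
    simpa using (congrFun (hc.pairIterate_add (0, q) (a, b)) x₀).symm
  have hgq : LipschitzWith 1 g^[q] := by simpa using hg.iterate q
  -- `g^[q]` moves `pairIterate f g (a, b) x₀` by at most `2 * C`, hence `x₀` by at most `4 * C`
  have hdisp : dist x₀ (g^[q] x₀) ≤ 4 * C := by
    have := hgq.dist_apply_le_two_mul_add x₀ (pairIterate f g (a, b) x₀)
    rw [hy] at this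
    linarith [dist_triangle (pairIterate f g (a, b) x₀) x₀ (pairIterate f g (a, q + b) x₀),
      dist_comm x₀ (pairIterate f g (a, b) x₀), dist_comm x₀ (pairIterate f g (a, q + b) x₀)]
  have hq : q < q₀ := lt_of_not_ge fun hq => (hq₀ q hq).not_ge hdisp
  rw [show (b : ℝ) - ↑(q + b) = -q by push_cast; ring, abs_neg, Nat.abs_cast]
  exact_mod_cast hq.le

theorem exists_abs_add_sub_le_of_dist_le (hf : LipschitzWith 1 f) (hg : LipschitzWith 1 g)
    (hc : Function.Commute f g) (hgdiv : Tendsto (fun q : ℕ => dist x₀ (g^[q] x₀)) atTop atTop)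
    {n : ℕ → ℕ} {R : ℝ} (hn : ∀ m, dist (pairIterate f g (m, n m) x₀) x₀ ≤ R) :
    ∃ c : ℝ, ∀ m m', |(n (m + m') : ℝ) - n m - n m'| ≤ c := by
  obtain ⟨q₀, hq₀⟩ := exists_abs_snd_sub_le_of_dist_le hg hc hgdiv (2 * R)
  have hR : 0 ≤ R := dist_nonneg.trans (hn 0)
  refine ⟨q₀, fun m m' => ?_⟩
  have hsum : dist (pairIterate f g (m + m', n m + n m') x₀) x₀ ≤ 2 * R := by
    have := (hf.pairIterate hg (m, n m)).dist_comp_apply_le (h' := pairIterate f g (m', n m')) x₀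
    rw [← Function.comp_apply (f := pairIterate f g (m, n m)), ← hc.pairIterate_add,
      Prod.mk_add_mk] at this
    linarith [hn m, hn m']
  have := hq₀ (m + m') (n (m + m')) (n m + n m') (by linarith [hn (m + m')]) hsum
  rwa [Nat.cast_add, ← sub_sub] at this

theorem dist_pairIterate_le_of_dist_le (hf : LipschitzWith 1 f) (hg : LipschitzWith 1 g)
    {n : ℕ → ℕ} {R : ℝ} (hn : ∀ m, dist (pairIterate f g (m, n m) x₀) x₀ ≤ R) (a b : ℕ) :
    dist (pairIterate f g (a, b) x₀) x₀ ≤ R + |(n a : ℝ) - b| * dist x₀ (g x₀) := by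
  linarith [dist_triangle (pairIterate f g (a, b) x₀) (pairIterate f g (a, n a) x₀) x₀, hn a,
    dist_pairIterate_le hf hg a (n a) b x₀,
    dist_comm (pairIterate f g (a, b) x₀) (pairIterate f g (a, n a) x₀)]

theorem exists_pos_forall_dist_pairIterate_le (hf : LipschitzWith 1 f) (hg : LipschitzWith 1 g)
    (hc : Function.Commute f g) (hfdiv : Tendsto (fun m : ℕ => dist x₀ (f^[m] x₀)) atTop atTop)
    (hgdiv : Tendsto (fun q : ℕ => dist x₀ (g^[q] x₀)) atTop atTop) {n : ℕ → ℕ} {R : ℝ}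
    (hn : ∀ m, dist (pairIterate f g (m, n m) x₀) x₀ ≤ R) :
    ∃ α > 0, ∀ C : ℝ, ∃ B : ℝ, ∀ s : ℕ × ℕ,
      |(s.2 : ℝ) - α * s.1| ≤ C → dist (pairIterate f g s x₀) x₀ ≤ B := by
  obtain ⟨c, hquasi⟩ := exists_abs_add_sub_le_of_dist_le hf hg hc hgdiv hn
  obtain ⟨α, hα⟩ := exists_abs_sub_mul_le_of_abs_add_sub_le (u := fun m => (n m : ℝ)) hquasi
  have hword := dist_pairIterate_le_of_dist_le hf hg hn
  have hδ : 0 ≤ dist x₀ (g x₀) := dist_nonneg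
  refine ⟨α, ?_, fun C => ⟨R + (c + C) * dist x₀ (g x₀), fun s hs => (hword s.1 s.2).trans ?_⟩⟩
  · -- if `α ≤ 0` then `n` is bounded, and so is the `f`-orbit of `x₀`
    by_contra! hα0
    obtain ⟨m, hm⟩ := (hfdiv.eventually_gt_atTop (R + c * dist x₀ (g x₀))).exists
    have hnm : |(n m : ℝ) - (0 : ℕ)| ≤ c := by
      have := (abs_le.mp (hα m)).2
      rw [Nat.cast_zero, sub_zero, Nat.abs_cast]
      nlinarith [(Nat.cast_nonneg m : (0 : ℝ) ≤ m)]
    have := (hword m 0).trans (by gcongr : _ ≤ R + c * dist x₀ (g x₀))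
    simp only [pairIterate_mk, Function.iterate_zero, Function.comp_id] at this
    linarith [dist_comm x₀ (f^[m] x₀)]
  · have := abs_sub_le (n s.1 : ℝ) (α * s.1) s.2
    rw [abs_sub_comm (α * _)] at this
    gcongr
    linarith [hα s.1]

end Slope

theorem exists_one_le_abs_sub_mul_le {α ε : ℝ} (hα : 0 < α) (hε : 0 < ε) :
    ∃ s : ℕ × ℕ, (1, 1) ≤ s ∧ |(s.2 : ℝ) - α * s.1| ≤ ε := by
  obtain ⟨N, hN⟩ := exists_nat_one_div_lt (lt_min hε (half_pos hα))
  obtain ⟨j, k, hk, -, hjk⟩ := Real.exists_int_int_abs_mul_sub_le α N.succ_pos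
  have hjk' : |(k : ℝ) * α - j| < min ε (α / 2) := by
    refine hjk.trans_lt (lt_of_le_of_lt ?_ hN)
    gcongr
    simp
  lift k to ℕ using hk.le
  have hk1 : (1 : ℝ) ≤ k := by exact_mod_cast hk
  push_cast at hjk'
  have hj : (0 : ℝ) < j := by
    have := (abs_lt.mp (hjk'.trans_le (min_le_right _ _))).2
    nlinarith
  lift j to ℕ using (by exact_mod_cast hj.le)
  refine ⟨(k, j), Prod.mk_le_mk.mpr ⟨by exact_mod_cast hk, by exact_mod_cast hj⟩, ?_⟩
  rw [abs_sub_comm, mul_comm]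
  simpa using (hjk'.trans_le (min_le_left _ _)).le

namespace Hindman

theorem FS_subset_of_add_mem {M : Type*} [AddSemigroup M] {S : Set M}
    (hS : ∀ a ∈ S, ∀ b ∈ S, a + b ∈ S) {A : Stream' M} (hA : ∀ j, A.get j ∈ S) : FS A ⊆ S := by
  intro s hs
  induction hs with
  | head' a => exact hA 0
  | tail' a m _ ih => exact ih fun j => hA (j + 1)
  | cons' a m _ ih => exact hS _ (hA 0) _ (ih fun j => hA (j + 1))

theorem abs_le_of_mem_FS_drop {M : Type*} [AddSemigroup M] {φ : M → ℝ}
    (hφ : ∀ a b, φ (a + b) = φ a + φ b) {A : Stream' M}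
    (hA : ∀ j, |φ (A.get j)| ≤ 2⁻¹ ^ (j + 1)) (J : ℕ) :
    ∀ s ∈ FS (A.drop J), |φ s| ≤ 2⁻¹ ^ J := by
  intro s hs
  generalize hb : A.drop J = b at hs
  induction hs generalizing J with
  | head' b =>
    rw [← hb, Stream'.head_drop]
    exact (hA J).trans (pow_le_pow_of_le_one (by norm_num) (by norm_num) J.le_succ)
  | tail' b m _ ih =>
    refine (ih (J + 1) ?_).trans (pow_le_pow_of_le_one (by norm_num) (by norm_num) J.le_succ)
    rw [← hb, Stream'.tail_drop']
  | cons' b m _ ih =>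
    rw [hφ, ← hb, Stream'.head_drop]
    have := ih (J + 1) (by rw [← hb, Stream'.tail_drop'])
    linarith [abs_add_le (φ (A.get J)) (φ m), hA J, pow_succ (2⁻¹ : ℝ) J]

end Hindman

theorem exists_FS_subset_abs_sub_mul_le_one {α : ℝ} (hα : 0 < α) :
    ∃ A : Stream' (ℕ × ℕ), ∀ s ∈ Hindman.FS A, (1, 1) ≤ s ∧ |(s.2 : ℝ) - α * s.1| ≤ 1 := by
  choose A hA₁ hA₂ using fun j : ℕ =>
    exists_one_le_abs_sub_mul_le hα (pow_pos (by norm_num : (0 : ℝ) < 2⁻¹) (j + 1))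
  refine ⟨A, fun s hs => ⟨Hindman.FS_subset_of_add_mem (S := {s | (1, 1) ≤ s}) (A := A)
    (fun a ha _ _ => le_add_right ha) hA₁ hs, ?_⟩⟩
  have hφ : ∀ s t : ℕ × ℕ, ((s + t).2 : ℝ) - α * (s + t).1 = (s.2 - α * s.1) + (t.2 - α * t.1) :=
    fun s t => by simp only [Prod.fst_add, Prod.snd_add]; push_cast; ring
  simpa using Hindman.abs_le_of_mem_FS_drop (φ := fun s : ℕ × ℕ => (s.2 : ℝ) - α * s.1)
    (A := A) hφ hA₂ 0 s hs

theorem commuting_lipschitz_retract_general {X : Type*} [MetricSpace X] [ProperSpace X]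
    (hgeo : ∀ x y : X, ∃ (γ : ℝ → X) (a b : ℝ),
      IsGeodesicSegment γ a b ∧ γ a = x ∧ γ b = y)
    (f g : X → X) (hf : LipschitzWith 1 f) (hg : LipschitzWith 1 g)
    (hcomm : f ∘ g = g ∘ f)
    (x₀ : X)
    (hfdiv : Tendsto (fun m : ℕ => dist x₀ (f^[m] x₀)) atTop atTop)
    (hgdiv : Tendsto (fun n : ℕ => dist x₀ (g^[n] x₀)) atTop atTop)
    (K : Set X) (hK : IsCompact K)
    (hreturn : ∀ m : ℕ, ∃ n : ℕ, (K ∩ (f^[m] ∘ g^[n]) '' K).Nonempty) :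
    ∃ (M : Set X) (ρ : X → X),
      M.Nonempty ∧ IsClosed M ∧
      LipschitzWith 1 ρ ∧
      ρ ∘ ρ = ρ ∧ Set.range ρ = M ∧
      ρ ∘ f = f ∘ ρ ∧ ρ ∘ g = g ∘ ρ ∧
      f '' M = M ∧ g '' M = M ∧
      (∀ x ∈ M, ∀ y ∈ M, dist (f x) (f y) = dist x y) ∧
      (∀ x ∈ M, ∀ y ∈ M, dist (g x) (g y) = dist x y) ∧
      (∀ x ∈ M, ∀ y ∈ M, ∃ (γ : ℝ → X) (a b : ℝ),
        IsGeodesicSegment γ a b ∧ γ a = x ∧ γ b = y ∧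
        ∀ t ∈ Set.Icc a b, γ t ∈ M) := by
  have hc : Function.Commute f g := fun x => congrFun hcomm x
  have hT := hf.pairIterate hg
  have hadd := hc.pairIterate_add
  obtain ⟨r, hr⟩ := hK.isBounded.subset_closedBall x₀
  have hret : ∀ m, ∃ n, dist (pairIterate f g (m, n) x₀) x₀ ≤ 2 * r := fun m => by
    obtain ⟨n, y, hy, k, hk, rfl⟩ := hreturn m
    exact ⟨n, (hT (m, n)).dist_apply_le_of_mem_closedBall (hr hk) (hr hy)⟩
  choose n hn using hret
  obtain ⟨α, hα, hslope⟩ := exists_pos_forall_dist_pairIterate_le hf hg hc hfdiv hgdiv hn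
  obtain ⟨A, hA⟩ := exists_FS_subset_abs_sub_mul_le_one hα
  obtain ⟨U, hUU, hUA⟩ := Hindman.exists_idempotent_ultrafilter_le_FS A
  obtain ⟨B, hB⟩ := hslope 1
  obtain ⟨ρ, hρ⟩ := exists_forall_tendsto_of_eventually_dist_le hT x₀
    (hUA.mono fun s hs => hB s (hA s hs).2)
  have he : ∀ e ≤ ((1, 1) : ℕ × ℕ), ∀ᶠ s in U, e ≤ s :=
    fun e he => hUA.mono fun s hs => he.trans (hA s hs).1
  have hρlip := lipschitzWith_one_of_tendsto hT hρ
  have hρρ := comp_self_of_tendsto hT hadd hUU hρ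
  have hf₁ : pairIterate f g (1, 0) = f := by simp
  have hg₁ : pairIterate f g (0, 1) = g := by simp
  refine ⟨range ρ, ρ, ⟨ρ x₀, x₀, rfl⟩, isClosed_range_of_comp_self hρlip.continuous hρρ, hρlip,
    hρρ, rfl, hf₁ ▸ comp_comm_of_tendsto hT hadd hρ _, hg₁ ▸ comp_comm_of_tendsto hT hadd hρ _,
    hf₁ ▸ image_range_eq_of_tendsto hT hadd hρ hρρ (he _ (by decide)),
    hg₁ ▸ image_range_eq_of_tendsto hT hadd hρ hρρ (he _ (by decide)),
    fun x hx y hy => hf₁ ▸ dist_apply_eq_of_tendsto hT hadd hρ hρρ (he _ (by decide)) hx hy,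
    fun x hx y hy => hg₁ ▸ dist_apply_eq_of_tendsto hT hadd hρ hρρ (he _ (by decide)) hx hy,
    fun x hx y hy => exists_isGeodesicSegment_mem_range hgeo hρlip hρρ hx hy⟩

/-- (Theorem 1.6, abstract retract form.)  In a proper geodesic metric space,
if `f, g` are commuting 1-Lipschitz maps whose orbits escape to infinity and some nonempty
compact `K` satisfies: for every `m` there is `n` with `K ∩ f^m(g^n(K)) ≠ ∅`, then there are a
nonempty closed totally geodesic set `M` and a 1-Lipschitz retraction `ρ` onto `M` commuting
with `f` and `g`, with `f(M) = M = g(M)` and `f|_M`, `g|_M` surjective isometries of `M`. -/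
theorem commuting_lipschitz_retract {X : Type*} [MetricSpace X] [ProperSpace X]
    (hgeo : ∀ x y : X, ∃ (γ : ℝ → X) (a b : ℝ),
      IsGeodesicSegment γ a b ∧ γ a = x ∧ γ b = y)
    (f g : X → X) (hf : LipschitzWith 1 f) (hg : LipschitzWith 1 g)
    (hcomm : f ∘ g = g ∘ f)
    (x₀ : X)
    (hfdiv : Tendsto (fun m : ℕ => dist x₀ (f^[m] x₀)) atTop atTop)
    (hgdiv : Tendsto (fun n : ℕ => dist x₀ (g^[n] x₀)) atTop atTop)
    (K : Set X) (hK : IsCompact K) (hKne : K.Nonempty)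
    (hreturn : ∀ m : ℕ, ∃ n : ℕ, (K ∩ (f^[m] ∘ g^[n]) '' K).Nonempty) :
    ∃ (M : Set X) (ρ : X → X),
      M.Nonempty ∧ IsClosed M ∧
      LipschitzWith 1 ρ ∧
      ρ ∘ ρ = ρ ∧ Set.range ρ = M ∧
      ρ ∘ f = f ∘ ρ ∧ ρ ∘ g = g ∘ ρ ∧
      f '' M = M ∧ g '' M = M ∧
      (∀ x ∈ M, ∀ y ∈ M, dist (f x) (f y) = dist x y) ∧
      (∀ x ∈ M, ∀ y ∈ M, dist (g x) (g y) = dist x y) ∧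
      (∀ x ∈ M, ∀ y ∈ M, ∃ (γ : ℝ → X) (a b : ℝ),
        IsGeodesicSegment γ a b ∧ γ a = x ∧ γ b = y ∧
        ∀ t ∈ Set.Icc a b, γ t ∈ M) :=
  commuting_lipschitz_retract_general hgeo f g hf hg hcomm x₀ hfdiv hgdiv K hK hreturn
end

section
/- Let D ⊆ ℂ^d be an unbounded ℂ-proper convex domain. If (z_n) and (w_n) are sequences in D with ‖z_n‖ → ∞ and w_n → ξ for some ξ ∈ ∂D, then K_D(z_n, w_n) → ∞. -/
/-!
Project `D` to `ℂ` by a complex-linear functional `Λ` whose real part is bounded above by `c` on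
`D`; then `p ↦ i (c - Λ p)` maps `D` holomorphically into the upper half-plane `ℍ`. By the
Schwarz–Pick lemma holomorphic discs contract the Poincaré distance, so `K_D` dominates half the
hyperbolic distance of the images, and since `Λ w_n` stays bounded, a bound `K_D(z_n, w_n) ≤ M`
forces `Λ z_n` to stay bounded. Along a subsequence `z_n / ‖z_n‖ → v ≠ 0`, so `Λ v = 0` for every
such `Λ`. By Hahn–Banach, a point outside the open convex set `D` is separated from it by such a
functional, hence `D` contains the complex line through any of its points in direction `v`,
contradicting ℂ-properness.
-/

open Set Metric Filter

noncomputable section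

/-- Inverse hyperbolic tangent, `artanh x = (1/2) log((1+x)/(1-x))`. -/
def artanh (x : ℝ) : ℝ := Real.log ((1 + x) / (1 - x)) / 2

/-- The Poincaré distance on the unit disc `𝔻 ⊆ ℂ`:
`ρ(a,b) = artanh |(a − b)/(1 − conj(a)·b)|`. -/
def poincareDist (a b : ℂ) : ℝ :=
  artanh (‖(a - b) / (1 - (starRingEnd ℂ) a * b)‖)

/-- The Kobayashi pseudodistance on a domain `D ⊆ ℂ^d`: the infimum of `Σ ρ(aᵢ,bᵢ)` over all
finite chains of holomorphic maps `fᵢ : 𝔻 → D` with `f₁(a₁) = x`, `fᵢ(bᵢ) = fᵢ₊₁(aᵢ₊₁)` and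
`f_N(b_N) = y`. -/
def kobayashiDist {d : ℕ} (D : Set (EuclideanSpace ℂ (Fin d)))
    (x y : EuclideanSpace ℂ (Fin d)) : ℝ :=
  sInf {c : ℝ | ∃ (N : ℕ) (f : Fin (N + 1) → ℂ → EuclideanSpace ℂ (Fin d))
      (a b : Fin (N + 1) → ℂ),
    (∀ i, DifferentiableOn ℂ (f i) (Metric.ball (0 : ℂ) 1)) ∧
    (∀ i, Set.MapsTo (f i) (Metric.ball (0 : ℂ) 1) D) ∧
    (∀ i, a i ∈ Metric.ball (0 : ℂ) 1) ∧ (∀ i, b i ∈ Metric.ball (0 : ℂ) 1) ∧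
    f 0 (a 0) = x ∧ f (Fin.last N) (b (Fin.last N)) = y ∧
    (∀ i : Fin N, f (Fin.castSucc i) (b (Fin.castSucc i)) = f (Fin.succ i) (a (Fin.succ i))) ∧
    c = ∑ i, poincareDist (a i) (b i)}

/-- A domain `D ⊆ ℂ^d` is ℂ-proper if it contains no complex affine line. -/
def CProper {d : ℕ} (D : Set (EuclideanSpace ℂ (Fin d))) : Prop :=
  ¬ ∃ (z v : EuclideanSpace ℂ (Fin d)), v ≠ 0 ∧ ∀ t : ℂ, z + t • v ∈ D

open Complex ComplexConjugate
open scoped UpperHalfPlane Topology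

lemma norm_div_lt_one_of_normSq_lt {u w : ℂ} (h : normSq u < normSq w) : ‖u / w‖ < 1 := by
  have hw : w ≠ 0 := fun hw ↦ by simp [hw] at h; linarith [normSq_nonneg u]
  rw [norm_div, div_lt_one (norm_pos_iff.2 hw)]
  rw [normSq_eq_norm_sq, normSq_eq_norm_sq] at h
  exact lt_of_pow_lt_pow_left₀ 2 (norm_nonneg w) h

def mobius (a z : ℂ) : ℂ := (z - a) / (1 - conj a * z)

lemma normSq_one_sub_conj_mul_sub_normSq_sub (a z : ℂ) :
    normSq (1 - conj a * z) - normSq (z - a) = (1 - normSq a) * (1 - normSq z) := by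
  simp only [normSq_apply, sub_re, sub_im, one_re, one_im, mul_re, mul_im, conj_re, conj_im]
  ring

lemma normSq_sub_lt_normSq_one_sub_conj_mul {a z : ℂ} (ha : ‖a‖ < 1) (hz : ‖z‖ < 1) :
    normSq (z - a) < normSq (1 - conj a * z) := by
  have key := normSq_one_sub_conj_mul_sub_normSq_sub a z
  have ha' : normSq a < 1 := by rw [normSq_eq_norm_sq]; nlinarith [norm_nonneg a]
  have hz' : normSq z < 1 := by rw [normSq_eq_norm_sq]; nlinarith [norm_nonneg z]
  nlinarith

lemma one_sub_conj_mul_ne_zero {a z : ℂ} (ha : ‖a‖ < 1) (hz : ‖z‖ < 1) :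
    1 - conj a * z ≠ 0 := fun h ↦ by
  simpa [h] using (normSq_nonneg (z - a)).trans_lt (normSq_sub_lt_normSq_one_sub_conj_mul ha hz)

lemma norm_mobius_lt_one {a z : ℂ} (ha : ‖a‖ < 1) (hz : ‖z‖ < 1) : ‖mobius a z‖ < 1 :=
  norm_div_lt_one_of_normSq_lt (normSq_sub_lt_normSq_one_sub_conj_mul ha hz)

lemma mapsTo_mobius {a : ℂ} (ha : ‖a‖ < 1) : MapsTo (mobius a) (ball 0 1) (ball 0 1) :=
  fun _ hz ↦ mem_ball_zero_iff.2 (norm_mobius_lt_one ha (mem_ball_zero_iff.1 hz))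

lemma differentiableOn_mobius {a : ℂ} (ha : ‖a‖ < 1) :
    DifferentiableOn ℂ (mobius a) (ball 0 1) :=
  (differentiableOn_id.sub_const a).div (by fun_prop)
    fun z hz ↦ one_sub_conj_mul_ne_zero ha (mem_ball_zero_iff.1 hz)

lemma mobius_neg_mobius {a z : ℂ} (ha : ‖a‖ < 1) (hz : ‖z‖ < 1) :
    mobius (-a) (mobius a z) = z := by
  have hz' := one_sub_conj_mul_ne_zero ha hz
  have ha' := one_sub_conj_mul_ne_zero ha ha
  have hden : 1 - conj (-a) * mobius a z = (1 - conj a * a) / (1 - conj a * z) := by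
    rw [mobius, map_neg]
    field_simp
    ring
  rw [mobius, hden, mobius, div_div_eq_mul_div, div_eq_iff ha', sub_mul, div_mul_cancel₀ _ hz']
  ring

lemma poincareDist_eq_artanh_norm_mobius {a b : ℂ} (ha : ‖a‖ < 1) (hb : ‖b‖ < 1) :
    poincareDist a b = Real.artanh ‖mobius a b‖ := by
  have h := norm_mobius_lt_one ha hb
  rw [Real.artanh_eq_half_log ⟨by linarith [norm_nonneg (mobius a b)], h.le⟩, poincareDist,
    artanh, mobius, norm_div, norm_div, norm_sub_rev a b]
  ring

def cayleyAt (p w : ℂ) : ℂ := (w - p) / (w - conj p)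

lemma normSq_sub_conj_sub_normSq_sub (p w : ℂ) :
    normSq (w - conj p) - normSq (w - p) = 4 * p.im * w.im := by
  simp only [normSq_apply, sub_re, sub_im, conj_re, conj_im]
  ring

lemma norm_cayleyAt_lt_one {p w : ℂ} (hp : 0 < p.im) (hw : 0 < w.im) : ‖cayleyAt p w‖ < 1 :=
  norm_div_lt_one_of_normSq_lt (by nlinarith [normSq_sub_conj_sub_normSq_sub p w])

lemma sub_conj_ne_zero {p w : ℂ} (hp : 0 < p.im) (hw : 0 < w.im) : w - conj p ≠ 0 :=
  fun h ↦ by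
    have := congrArg Complex.im h
    simp only [sub_im, conj_im, sub_neg_eq_add, zero_im] at this
    linarith

/-- **Schwarz–Pick lemma** for holomorphic maps from the unit disc to the upper half-plane. -/
theorem norm_cayleyAt_le_norm_mobius {F : ℂ → ℂ} (hF : DifferentiableOn ℂ F (ball 0 1))
    (hF_im : ∀ ζ ∈ ball (0 : ℂ) 1, 0 < (F ζ).im) {a b : ℂ} (ha : ‖a‖ < 1) (hb : ‖b‖ < 1) :
    ‖cayleyAt (F a) (F b)‖ ≤ ‖mobius a b‖ := by
  have ha' : ‖-a‖ < 1 := by rwa [norm_neg]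
  have hFa := hF_im a (mem_ball_zero_iff.2 ha)
  have hG_im : ∀ ζ ∈ ball (0 : ℂ) 1, 0 < (F (mobius (-a) ζ)).im :=
    fun ζ hζ ↦ hF_im _ (mapsTo_mobius ha' hζ)
  have hG : DifferentiableOn ℂ (fun ζ ↦ F (mobius (-a) ζ)) (ball 0 1) :=
    hF.comp (differentiableOn_mobius ha') (mapsTo_mobius ha')
  set h : ℂ → ℂ := fun ζ ↦ cayleyAt (F a) (F (mobius (-a) ζ))
  have hh : DifferentiableOn ℂ h (ball 0 1) :=
    (hG.sub_const _).div (hG.sub_const _) fun ζ hζ ↦ sub_conj_ne_zero hFa (hG_im ζ hζ)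
  have hh_maps : MapsTo h (ball 0 1) (closedBall 0 1) := fun ζ hζ ↦
    mem_closedBall_zero_iff.2 (norm_cayleyAt_lt_one hFa (hG_im ζ hζ)).le
  have hh_zero : h 0 = 0 := by simp [h, mobius, cayleyAt]
  simpa [h, mobius_neg_mobius ha hb] using
    Complex.norm_le_norm_of_mapsTo_ball hh hh_maps hh_zero (norm_mobius_lt_one ha hb)

theorem UpperHalfPlane.dist_mk_le_two_mul_poincareDist {F : ℂ → ℂ}
    (hF : DifferentiableOn ℂ F (ball 0 1)) (hF_im : ∀ ζ ∈ ball (0 : ℂ) 1, 0 < (F ζ).im)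
    {a b : ℂ} (ha : a ∈ ball (0 : ℂ) 1) (hb : b ∈ ball (0 : ℂ) 1) :
    dist (mk (F a) (hF_im a ha)) (mk (F b) (hF_im b hb)) ≤ 2 * poincareDist a b := by
  have ha' := mem_ball_zero_iff.1 ha
  have hb' := mem_ball_zero_iff.1 hb
  have htanh : Real.tanh (dist (mk (F a) (hF_im a ha)) (mk (F b) (hF_im b hb)) / 2) =
      ‖cayleyAt (F a) (F b)‖ := by
    rw [dist_comm, tanh_half_dist, cayleyAt, norm_div, coe_mk, coe_mk, Complex.dist_eq,
      Complex.dist_eq]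
  have := Real.artanh_le_artanh (Real.neg_one_lt_tanh _) (norm_mobius_lt_one ha' hb')
    (htanh ▸ norm_cayleyAt_le_norm_mobius hF hF_im ha' hb')
  rw [Real.artanh_tanh, ← poincareDist_eq_artanh_norm_mobius ha' hb'] at this
  linarith

lemma dist_le_sum_dist_of_chain {X : Type*} [PseudoMetricSpace X] {N : ℕ}
    (Q R : Fin (N + 1) → X) (hQR : ∀ i : Fin N, R i.castSucc = Q i.succ) :
    dist (Q 0) (R (Fin.last N)) ≤ ∑ i, dist (Q i) (R i) := by
  induction N with
  | zero => simp
  | succ N ih =>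
    have htail := ih (Q ∘ Fin.succ) (R ∘ Fin.succ) fun i ↦ by
      simpa only [Function.comp, Fin.succ_castSucc] using hQR i.succ
    rw [Fin.sum_univ_succ]
    calc dist (Q 0) (R (Fin.last (N + 1)))
        ≤ dist (Q 0) (R 0) + dist (R 0) (R (Fin.last (N + 1))) := dist_triangle _ _ _
      _ ≤ _ := by
        rw [← Fin.succ_last, show R 0 = Q (0 : Fin (N + 1)).succ from hQR 0]
        exact add_le_add le_rfl htail

section KobayashiChains

variable {E : Type*} [NormedAddCommGroup E] [NormedSpace ℂ E]

def kobayashiChainLengths (D : Set E) (x y : E) : Set ℝ :=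
  {c : ℝ | ∃ (N : ℕ) (f : Fin (N + 1) → ℂ → E) (a b : Fin (N + 1) → ℂ),
    (∀ i, DifferentiableOn ℂ (f i) (Metric.ball (0 : ℂ) 1)) ∧
    (∀ i, Set.MapsTo (f i) (Metric.ball (0 : ℂ) 1) D) ∧
    (∀ i, a i ∈ Metric.ball (0 : ℂ) 1) ∧ (∀ i, b i ∈ Metric.ball (0 : ℂ) 1) ∧
    f 0 (a 0) = x ∧ f (Fin.last N) (b (Fin.last N)) = y ∧
    (∀ i : Fin N, f (Fin.castSucc i) (b (Fin.castSucc i)) = f (Fin.succ i) (a (Fin.succ i))) ∧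
    c = ∑ i, poincareDist (a i) (b i)}

lemma kobayashiDist_eq_sInf {d : ℕ} (D : Set (EuclideanSpace ℂ (Fin d)))
    (x y : EuclideanSpace ℂ (Fin d)) :
    kobayashiDist D x y = sInf (kobayashiChainLengths D x y) :=
  rfl

lemma dist_chainDisc_segment_le (x u : E) (N i : ℕ) {ζ : ℂ} (hζ : ‖ζ‖ < 1) :
    dist (x + (((i : ℂ) + 2 * ζ) / (N + 1)) • u) (x + ((i : ℝ) / (N + 1)) • u) ≤
      2 * ‖u‖ / (N + 1) := by
  have hscalar : ((i : ℂ) + 2 * ζ) / (N + 1) - ((i / (N + 1) : ℝ) : ℂ) = 2 * ζ / (N + 1) := by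
    push_cast
    ring
  rw [dist_add_left, ← Complex.coe_smul, dist_eq_norm, ← sub_smul, hscalar, norm_smul, norm_div,
    norm_mul, div_mul_eq_mul_div]
  norm_cast
  gcongr
  nlinarith [norm_nonneg u]

/-- A chain of `N + 1` discs `ζ ↦ x + ((i + 2ζ) / (N + 1)) • (y - x)`, linked through `ζ = 1/2`
and `ζ = 0`, lies in a thickening of the segment `[x, y]` contained in `D`. -/
lemma kobayashiChainLengths_nonempty {D : Set E} (hD_open : IsOpen D) (hD_conv : Convex ℝ D)
    {x y : E} (hx : x ∈ D) (hy : y ∈ D) : (kobayashiChainLengths D x y).Nonempty := by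
  obtain ⟨ε, hε, hthick⟩ :=
    ((Set.toFinite {x, y}).isCompact_convexHull ℝ).exists_thickening_subset_open hD_open
      ((convexHull_pair (𝕜 := ℝ) x y).symm ▸ hD_conv.segment_subset hx hy)
  obtain ⟨N, hN⟩ := exists_nat_gt (2 * ‖y - x‖ / ε)
  have hN₀ : (0 : ℝ) < N + 1 := by positivity
  set f : Fin (N + 1) → ℂ → E := fun i ζ ↦ x + (((i : ℕ) + 2 * ζ) / (N + 1) : ℂ) • (y - x)
  refine ⟨_, N, f, fun _ ↦ 0, fun _ ↦ 1 / 2, fun i ↦ by fun_prop, fun i ζ hζ ↦ ?_,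
    fun _ ↦ by simp, fun _ ↦ by norm_num [mem_ball_zero_iff], by simp [f], ?_, fun i ↦ ?_, rfl⟩
  · have hi : ((i : ℕ) / (N + 1) : ℝ) ∈ Icc (0 : ℝ) 1 :=
      ⟨by positivity, (div_le_one hN₀).2 (by exact_mod_cast i.is_le.trans N.le_succ)⟩
    have hζ_dist := dist_chainDisc_segment_le x (y - x) N i (mem_ball_zero_iff.1 hζ)
    refine hthick (mem_thickening_iff.2 ⟨_, ?_, hζ_dist.trans_lt ?_⟩)
    · rw [convexHull_pair, segment_eq_image']
      exact ⟨_, hi, rfl⟩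
    · rw [div_lt_iff₀ hε] at hN
      rw [div_lt_iff₀ hN₀]
      linarith
  · simp only [f, Fin.val_last]
    rw [show ((N : ℂ) + 2 * (1 / 2)) / (N + 1) = 1 by field_simp, one_smul]
    abel
  · simp only [f, Fin.val_castSucc, Fin.val_succ]
    congr 2
    push_cast
    ring

lemma UpperHalfPlane.dist_mk_le_two_mul_of_mem_kobayashiChainLengths {D : Set E} {g : E → ℂ}
    (hg : DifferentiableOn ℂ g D) (hg_im : ∀ p ∈ D, 0 < (g p).im) {x y : E}
    (hx : x ∈ D) (hy : y ∈ D) {c : ℝ} (hc : c ∈ kobayashiChainLengths D x y) :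
    dist (mk (g x) (hg_im x hx)) (mk (g y) (hg_im y hy)) ≤ 2 * c := by
  obtain ⟨N, f, a, b, hf, hfD, ha, hb, rfl, rfl, hlink, rfl⟩ := hc
  have hgf_im : ∀ i, ∀ ζ ∈ ball (0 : ℂ) 1, 0 < (g (f i ζ)).im := fun i ζ hζ ↦ hg_im _ (hfD i hζ)
  let Q : Fin (N + 1) → ℍ := fun i ↦ mk _ (hgf_im i _ (ha i))
  let R : Fin (N + 1) → ℍ := fun i ↦ mk _ (hgf_im i _ (hb i))
  have hQR : ∀ i : Fin N, R i.castSucc = Q i.succ := fun i ↦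
    UpperHalfPlane.ext (congrArg g (hlink i))
  calc dist (Q 0) (R (Fin.last N)) ≤ ∑ i, dist (Q i) (R i) := dist_le_sum_dist_of_chain Q R hQR
    _ ≤ ∑ i, 2 * poincareDist (a i) (b i) := Finset.sum_le_sum fun i _ ↦
        dist_mk_le_two_mul_poincareDist (hg.comp (hf i) (hfD i)) (hgf_im i) (ha i) (hb i)
    _ = 2 * ∑ i, poincareDist (a i) (b i) := (Finset.mul_sum ..).symm

end KobayashiChains

section Euclidean

variable {d : ℕ} {D : Set (EuclideanSpace ℂ (Fin d))}

lemma UpperHalfPlane.dist_mk_le_two_mul_kobayashiDist (hD_open : IsOpen D)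
    (hD_conv : Convex ℝ D) {g : EuclideanSpace ℂ (Fin d) → ℂ} (hg : DifferentiableOn ℂ g D)
    (hg_im : ∀ p ∈ D, 0 < (g p).im) {x y : EuclideanSpace ℂ (Fin d)} (hx : x ∈ D) (hy : y ∈ D) :
    dist (mk (g x) (hg_im x hx)) (mk (g y) (hg_im y hy)) ≤ 2 * kobayashiDist D x y := by
  rw [kobayashiDist_eq_sInf, ← div_le_iff₀' two_pos]
  exact le_csInf (kobayashiChainLengths_nonempty hD_open hD_conv hx hy) fun c hc ↦
    (div_le_iff₀' two_pos).2 (dist_mk_le_two_mul_of_mem_kobayashiChainLengths hg hg_im hx hy hc)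

lemma norm_sub_le_of_kobayashiDist_le (hD_open : IsOpen D) (hD_conv : Convex ℝ D)
    (Λ : EuclideanSpace ℂ (Fin d) →L[ℂ] ℂ) {c : ℝ} (hc : ∀ p ∈ D, (Λ p).re < c)
    {x y : EuclideanSpace ℂ (Fin d)} (hx : x ∈ D) (hy : y ∈ D) {M : ℝ}
    (hK : kobayashiDist D x y ≤ M) :
    ‖Λ x - Λ y‖ ≤ (c - (Λ y).re) * (Real.exp (2 * M) - 1) := by
  set g : EuclideanSpace ℂ (Fin d) → ℂ := fun p ↦ I * (c - Λ p)
  have hg_im : ∀ p ∈ D, 0 < (g p).im := fun p hp ↦ by simpa [g] using hc p hp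
  have hdist := UpperHalfPlane.dist_mk_le_two_mul_kobayashiDist hD_open hD_conv
    (by fun_prop : Differentiable ℂ g).differentiableOn hg_im hx hy
  calc ‖Λ x - Λ y‖ = dist (g x) (g y) := by simp [g, Complex.dist_eq, ← mul_sub, norm_sub_rev]
    _ ≤ (g y).im * (Real.exp (dist (UpperHalfPlane.mk _ (hg_im x hx))
          (UpperHalfPlane.mk _ (hg_im y hy))) - 1) :=
        UpperHalfPlane.dist_coe_le (.mk _ (hg_im x hx)) (.mk _ (hg_im y hy))
    _ ≤ (c - (Λ y).re) * (Real.exp (2 * M) - 1) := by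
        have hy_im : (g y).im = c - (Λ y).re := by simp [g]
        rw [hy_im]
        gcongr
        · linarith [hc y hy]
        · linarith

lemma isBoundedUnder_norm_map_of_kobayashiDist_le (hD_open : IsOpen D) (hD_conv : Convex ℝ D)
    (Λ : EuclideanSpace ℂ (Fin d) →L[ℂ] ℂ) {c : ℝ} (hc : ∀ p ∈ D, (Λ p).re < c)
    {ι : Type*} {l : Filter ι} {z w : ι → EuclideanSpace ℂ (Fin d)} (hz : ∀ n, z n ∈ D)
    (hw : ∀ n, w n ∈ D) {M : ℝ} (hK : ∀ᶠ n in l, kobayashiDist D (z n) (w n) ≤ M)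
    (hΛw : IsBoundedUnder (· ≤ ·) l fun n ↦ ‖Λ (w n)‖) :
    IsBoundedUnder (· ≤ ·) l fun n ↦ ‖Λ (z n)‖ := by
  obtain ⟨C, hC⟩ := hΛw
  refine ⟨C + (c + C) * (Real.exp (2 * M) - 1), eventually_map.2 ?_⟩
  filter_upwards [hK, eventually_map.1 hC] with n hKn hCn
  have hbound := norm_sub_le_of_kobayashiDist_le hD_open hD_conv Λ hc (hz n) (hw n) hKn
  have hgap : 0 < c - (Λ (w n)).re := sub_pos.2 (hc _ (hw n))
  have hexp : 0 ≤ Real.exp (2 * M) - 1 :=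
    nonneg_of_mul_nonneg_right ((norm_nonneg _).trans hbound) hgap
  have hre : -(Λ (w n)).re ≤ C := (neg_le_abs _).trans ((abs_re_le_norm _).trans hCn)
  calc ‖Λ (z n)‖ ≤ ‖Λ (w n)‖ + ‖Λ (z n) - Λ (w n)‖ := norm_le_insert' _ _
    _ ≤ C + (c - (Λ (w n)).re) * (Real.exp (2 * M) - 1) := add_le_add hCn hbound
    _ ≤ C + (c + C) * (Real.exp (2 * M) - 1) := by gcongr; linarith

end Euclidean

lemma map_eq_zero_of_tendsto_inv_norm_smul {E F : Type*} [NormedAddCommGroup E]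
    [NormedSpace ℝ E] [NormedAddCommGroup F] [NormedSpace ℝ F] (Λ : E →L[ℝ] F) {ι : Type*}
    {l : Filter ι} [l.NeBot] {z : ι → E} {v : E} (hz : Tendsto (fun n ↦ ‖z n‖) l atTop)
    (hΛz : IsBoundedUnder (· ≤ ·) l fun n ↦ ‖Λ (z n)‖)
    (hv : Tendsto (fun n ↦ ‖z n‖⁻¹ • z n) l (𝓝 v)) : Λ v = 0 := by
  refine tendsto_nhds_unique ((Λ.continuous.tendsto v).comp hv) ?_
  simpa only [Function.comp_def, map_smul, Pi.inv_apply] using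
    hz.inv_tendsto_atTop.zero_smul_isBoundedUnder_le hΛz

lemma exists_subseq_tendsto_inv_norm_smul {E : Type*} [NormedAddCommGroup E] [NormedSpace ℝ E]
    [ProperSpace E] {z : ℕ → E} (hz : Tendsto (fun n ↦ ‖z n‖) atTop atTop) :
    ∃ v ≠ 0, ∃ ψ : ℕ → ℕ, StrictMono ψ ∧
      Tendsto (fun n ↦ ‖z (ψ n)‖⁻¹ • z (ψ n)) atTop (𝓝 v) := by
  have hnorm {x : E} (hx : x ≠ 0) : ‖‖x‖⁻¹ • x‖ = 1 := by
    rw [norm_smul, norm_inv, norm_norm, inv_mul_cancel₀ (norm_ne_zero_iff.2 hx)]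
  obtain ⟨v, -, ψ, hψ, hv⟩ := (isCompact_closedBall (0 : E) 1).tendsto_subseq
    (x := fun n ↦ ‖z n‖⁻¹ • z n) fun n ↦ by
      rw [mem_closedBall_zero_iff]
      rcases eq_or_ne (z n) 0 with h | h
      · simp [h]
      · exact (hnorm h).le
  refine ⟨v, fun hv0 ↦ ?_, ψ, hψ, hv⟩
  have hz_ne : ∀ᶠ n in atTop, z (ψ n) ≠ 0 :=
    ((hz.comp hψ.tendsto_atTop).eventually_gt_atTop 0).mono fun n hn ↦ norm_pos_iff.1 hn
  have h1 : Tendsto (fun n ↦ ‖‖z (ψ n)‖⁻¹ • z (ψ n)‖) atTop (𝓝 1) :=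
    tendsto_const_nhds.congr' (hz_ne.mono fun n hn ↦ (hnorm hn).symm)
  simpa [hv0] using tendsto_nhds_unique hv.norm h1

lemma add_smul_mem_of_forall_map_eq_zero {E : Type*} [NormedAddCommGroup E] [NormedSpace ℂ E]
    {D : Set E} (hD_open : IsOpen D) (hD_conv : Convex ℝ D) {v : E}
    (hv : ∀ Λ : E →L[ℂ] ℂ, (∃ c : ℝ, ∀ p ∈ D, (Λ p).re < c) → Λ v = 0) {p : E} (hp : p ∈ D)
    (t : ℂ) : p + t • v ∈ D := by
  by_contra hpt
  obtain ⟨f, u, hfD, hfpt⟩ := geometric_hahn_banach_open hD_conv hD_open (convex_singleton _)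
    (disjoint_singleton_right.2 hpt)
  have hΛ := hv (StrongDual.extendRCLike f) ⟨u, fun q hq ↦ by
    rw [← RCLike.re_to_complex, StrongDual.re_extendRCLike_apply]
    exact hfD q hq⟩
  have hftv : f (t • v) = 0 := by
    simpa [hΛ] using (StrongDual.re_extendRCLike_apply (𝕜 := ℂ) f (t • v)).symm
  have hfp := hfpt _ rfl
  rw [map_add, hftv, add_zero] at hfp
  exact (hfD p hp).not_ge hfp

theorem kobayashi_dist_tendsto_atTop_general {d : ℕ} (D : Set (EuclideanSpace ℂ (Fin d)))
    (hD_open : IsOpen D) (hD_conv : Convex ℝ D)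
    (hD_proper : CProper D)
    (z w : ℕ → EuclideanSpace ℂ (Fin d))
    (hz : ∀ n, z n ∈ D) (hw : ∀ n, w n ∈ D)
    (hznorm : Tendsto (fun n => ‖z n‖) atTop atTop)
    (ξ : EuclideanSpace ℂ (Fin d))
    (hwlim : Tendsto w atTop (nhds ξ)) :
    Tendsto (fun n => kobayashiDist D (z n) (w n)) atTop atTop := by
  by_contra hK
  obtain ⟨M, hM⟩ : ∃ M, ∃ᶠ n in atTop, kobayashiDist D (z n) (w n) < M := by
    simpa [Filter.tendsto_atTop, not_eventually, frequently_atTop] using hK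
  obtain ⟨φ, hφ, hφM⟩ := extraction_of_frequently_atTop hM
  obtain ⟨v, hv, ψ, hψ, hzv⟩ :=
    exists_subseq_tendsto_inv_norm_smul (hznorm.comp hφ.tendsto_atTop)
  have hθ : Tendsto (φ ∘ ψ) atTop atTop := (hφ.comp hψ).tendsto_atTop
  refine hD_proper ⟨z 0, v, hv, add_smul_mem_of_forall_map_eq_zero hD_open hD_conv ?_ (hz 0)⟩
  rintro Λ ⟨c, hc⟩
  refine map_eq_zero_of_tendsto_inv_norm_smul (Λ.restrictScalars ℝ) (hznorm.comp hθ) ?_ hzv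
  exact isBoundedUnder_norm_map_of_kobayashiDist_le hD_open hD_conv Λ hc (fun _ ↦ hz _)
    (fun _ ↦ hw _) (.of_forall fun n ↦ (hφM (ψ n)).le)
    ((Λ.continuous.tendsto ξ).comp (hwlim.comp hθ)).norm.isBoundedUnder_le

/-- If `D ⊆ ℂ^d` is an unbounded ℂ-proper convex domain, `‖z_n‖ → ∞` and
`w_n → ξ ∈ ∂D`, then `K_D(z_n, w_n) → ∞`. -/
theorem kobayashi_dist_tendsto_atTop {d : ℕ} (D : Set (EuclideanSpace ℂ (Fin d)))
    (hD_open : IsOpen D) (hD_conn : IsConnected D) (hD_conv : Convex ℝ D)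
    (hD_unb : ¬ Bornology.IsBounded D) (hD_proper : CProper D)
    (z w : ℕ → EuclideanSpace ℂ (Fin d))
    (hz : ∀ n, z n ∈ D) (hw : ∀ n, w n ∈ D)
    (hznorm : Tendsto (fun n => ‖z n‖) atTop atTop)
    (ξ : EuclideanSpace ℂ (Fin d)) (hξ : ξ ∈ frontier D)
    (hwlim : Tendsto w atTop (nhds ξ)) :
    Tendsto (fun n => kobayashiDist D (z n) (w n)) atTop atTop :=
  kobayashi_dist_tendsto_atTop_general D hD_open hD_conv hD_proper z w hz hw hznorm ξ hwlim

end
end
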